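/- arXiv:2511.06768 — 9 statements merged into one kernel-verified Lean document; each statement's English description precedes it below -/
import Mathlib

section
/- For any integers t ≥ 0 and c ≥ 0, there exists a latin cube of order t + c containing a subcube of order c if and only if t ≥ c (interpreting the case c = 0 or c = t + c trivially as true). -/
/-!
If `0 < c < t + c`, take a file `k` outside the subcube and a row `x` of it. On the line through
row `x` and file `k`, the `c` columns of the subcube carry `c` distinct symbols, none of them a
symbol of the subcube (each of those already occurs on that row-column line inside the subcube,
in a different file). Hence `2c ≤ t + c`.

Conversely, if a latin square `L` restricts to a latin square `M` on a set used as rows, columns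
and symbols alike, then `L (L i j) k` is a latin cube with the subcube `M (M x y) z`. For
`1 ≤ c ≤ t` such a square of order `t + c` is built on `Fin c ⊕ Fin t` by prolongation: in the
`Fin t` block the diagonals `w - v ∈ E`, `|E| = t - c`, carry `v + θ (w - v)` with `θ` and `θ - id`
injective on `E`, the other `c` diagonals carry the `c` new symbols, and the new rows and columns
are translates of the symbols this leaves out.
-/

def IsLatinCube {n : ℕ} (C : Fin n → Fin n → Fin n → Fin n) : Prop :=
  (∀ i j, Function.Bijective fun k => C i j k) ∧
  (∀ i k, Function.Bijective fun j => C i j k) ∧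
  (∀ j k, Function.Bijective fun i => C i j k)

open Function

section LatinSquare

variable {α β : Type*}

def IsLatinSquare (L : α → α → α) : Prop :=
  (∀ a, Bijective (L a)) ∧ ∀ b, Bijective fun a => L a b

lemma IsLatinSquare.of_injective [Finite α] {L : α → α → α} (hrow : ∀ a, Injective (L a))
    (hcol : ∀ b, Injective fun a => L a b) : IsLatinSquare L :=
  ⟨fun a => Finite.injective_iff_bijective.mp (hrow a),
    fun b => Finite.injective_iff_bijective.mp (hcol b)⟩

lemma isLatinSquare_fin_add (n : ℕ) : IsLatinSquare ((· + ·) : Fin n → Fin n → Fin n) :=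
  .of_injective (fun _ => add_right_injective _) (fun _ => add_left_injective _)

lemma IsLatinSquare.equiv {L : α → α → α} (hL : IsLatinSquare L) (e : α ≃ β) :
    IsLatinSquare fun x y => e (L (e.symm x) (e.symm y)) :=
  ⟨fun _ => e.bijective.comp ((hL.1 _).comp e.symm.bijective),
    fun _ => e.bijective.comp ((hL.2 _).comp e.symm.bijective)⟩

lemma IsLatinSquare.isLatinCube_comp {n : ℕ} {L : Fin n → Fin n → Fin n}
    (hL : IsLatinSquare L) : IsLatinCube fun i j k => L (L i j) k :=
  ⟨fun _ _ => hL.1 _, fun i k => (hL.2 k).comp (hL.1 i), fun j k => (hL.2 k).comp (hL.2 j)⟩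

end LatinSquare

def HasLatinSubcube (n c : ℕ) : Prop :=
  ∃ C : Fin n → Fin n → Fin n → Fin n, IsLatinCube C ∧
    ∃ (rows cols files syms : Fin c ↪ Fin n) (S : Fin c → Fin c → Fin c → Fin c),
      IsLatinCube S ∧ ∀ x y z, C (rows x) (cols y) (files z) = syms (S x y z)

lemma HasLatinSubcube.two_mul_le {n c : ℕ} (h : HasLatinSubcube n c) (hc : 0 < c)
    (hcn : c < n) : 2 * c ≤ n := by
  obtain ⟨C, hC, rows, cols, files, syms, S, hS, hCS⟩ := h
  obtain ⟨k, hk⟩ : ∃ k, ∀ z, files z ≠ k := by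
    by_contra! hfiles
    have := Fintype.card_le_of_surjective files hfiles
    simp only [Fintype.card_fin] at this
    omega
  let x : Fin c := ⟨0, hc⟩
  have hdisj : ∀ y w, C (rows x) (cols y) k ≠ syms w := by
    intro y w hyw
    obtain ⟨z, rfl⟩ := (hS.1 x y).2 w
    exact hk z ((hC.1 _ _).1 ((hCS x y z).trans hyw.symm))
  have hinj : Injective (Sum.elim (fun y => C (rows x) (cols y) k) syms) :=
    .sumElim (fun _ _ hy => cols.injective ((hC.2.1 _ _).1 hy)) syms.injective hdisj
  simpa [two_mul] using Fintype.card_le_of_injective _ hinj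

lemma hasLatinSubcube_of_isLatinSquare {α : Type*} {n c : ℕ} (e : α ≃ Fin n)
    {L : α → α → α} (hL : IsLatinSquare L) {M : Fin c → Fin c → Fin c} (hM : IsLatinSquare M)
    (r : Fin c ↪ α) (hr : ∀ x y, L (r x) (r y) = r (M x y)) : HasLatinSubcube n c := by
  let r' := r.trans e.toEmbedding
  have hr' : ∀ x y, e (L (e.symm (r' x)) (e.symm (r' y))) = r' (M x y) := by
    simp [r', hr]
  exact ⟨_, (hL.equiv e).isLatinCube_comp, r', r', r', r', _, hM.isLatinCube_comp,
    fun x y z => by simp only [hr']⟩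

lemma hasLatinSubcube_zero (n : ℕ) : HasLatinSubcube n 0 :=
  hasLatinSubcube_of_isLatinSquare (.refl _) (isLatinSquare_fin_add n) (isLatinSquare_fin_add 0)
    .ofIsEmpty fun x => x.elim0

lemma hasLatinSubcube_self (n : ℕ) : HasLatinSubcube n n :=
  hasLatinSubcube_of_isLatinSquare (.refl _) (isLatinSquare_fin_add n) (isLatinSquare_fin_add n)
    (.refl _) fun _ _ => rfl

section Prolongation

variable {α G : Type*} [AddCommGroup G] [DecidableEq G]

def prolongation (M : α → α → α) (E : Finset G) (θ : G → G) (idx : G → α) (f h : α → G) :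
    α ⊕ G → α ⊕ G → α ⊕ G
  | .inl a, .inl b => .inl (M a b)
  | .inl a, .inr w => .inr (w + h a)
  | .inr v, .inl b => .inr (v + f b)
  | .inr v, .inr w => if w - v ∈ E then .inr (v + θ (w - v)) else .inl (idx (w - v))

variable {M : α → α → α} {E : Finset G} {θ : G → G} {idx : G → α} {f h : α → G}

lemma prolongation_row_injective (hM : IsLatinSquare M) (hθ : Set.InjOn θ E)
    (hidx : Set.InjOn idx (↑E)ᶜ) (hf : Injective f) (hfθ : ∀ a, f a ∉ E.image θ) (a : α ⊕ G) :
    Injective (prolongation M E θ idx f h a) := by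
  rcases a with a | v
  · rintro (b₁ | w₁) (b₂ | w₂) heq <;>
      simp only [prolongation, reduceCtorEq, Sum.inl.injEq, Sum.inr.injEq] at heq
    · rw [(hM.1 a).1 heq]
    · rw [add_right_cancel heq]
  have hmix : ∀ b w, prolongation M E θ idx f h (.inr v) (.inl b) ≠
      prolongation M E θ idx f h (.inr v) (.inr w) := by
    intro b w heq
    simp only [prolongation] at heq
    split_ifs at heq with hw
    simp only [Sum.inr.injEq, add_right_inj] at heq
    exact hfθ b (heq ▸ Finset.mem_image_of_mem θ hw)
  rintro (b₁ | w₁) (b₂ | w₂) heq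
  · simp only [prolongation, Sum.inr.injEq, add_right_inj] at heq
    rw [hf heq]
  · exact absurd heq (hmix _ _)
  · exact absurd heq.symm (hmix _ _)
  · by_cases h₁ : w₁ - v ∈ E <;> by_cases h₂ : w₂ - v ∈ E <;>
      simp only [prolongation, h₁, h₂, ↓reduceIte, reduceCtorEq, Sum.inl.injEq, Sum.inr.injEq,
        add_right_inj] at heq ⊢
    · exact sub_left_injective (hθ h₁ h₂ heq)
    · exact sub_left_injective (hidx h₁ h₂ heq)

lemma prolongation_col_injective (hM : IsLatinSquare M) (hθ : Set.InjOn (fun e => θ e - e) E)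
    (hidx : Set.InjOn idx (↑E)ᶜ) (hh : Injective h) (hhθ : ∀ a, h a ∉ E.image fun e => θ e - e)
    (b : α ⊕ G) : Injective fun a => prolongation M E θ idx f h a b := by
  rcases b with b | w
  · rintro (a₁ | v₁) (a₂ | v₂) heq <;>
      simp only [prolongation, reduceCtorEq, Sum.inl.injEq, Sum.inr.injEq] at heq
    · rw [(hM.2 b).1 heq]
    · rw [add_right_cancel heq]
  have hcell : ∀ v, v + θ (w - v) = w + (θ (w - v) - (w - v)) := fun v => by abel
  have hmix : ∀ a v, prolongation M E θ idx f h (.inl a) (.inr w) ≠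
      prolongation M E θ idx f h (.inr v) (.inr w) := by
    intro a v heq
    simp only [prolongation] at heq
    split_ifs at heq with hv
    simp only [Sum.inr.injEq, hcell, add_right_inj] at heq
    exact hhθ a (heq ▸ Finset.mem_image_of_mem _ hv)
  rintro (a₁ | v₁) (a₂ | v₂) heq
  · simp only [prolongation, Sum.inr.injEq, add_right_inj] at heq
    rw [hh heq]
  · exact absurd heq (hmix _ _)
  · exact absurd heq.symm (hmix _ _)
  · by_cases h₁ : w - v₁ ∈ E <;> by_cases h₂ : w - v₂ ∈ E <;>
      simp only [prolongation, h₁, h₂, ↓reduceIte, reduceCtorEq, Sum.inl.injEq, Sum.inr.injEq,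
        hcell, add_right_inj] at heq ⊢
    · exact sub_right_injective (hθ h₁ h₂ heq)
    · exact sub_right_injective (hidx h₁ h₂ heq)

lemma isLatinSquare_prolongation [Finite α] [Finite G] (hM : IsLatinSquare M)
    (hθ : Set.InjOn θ E) (hθ' : Set.InjOn (fun e => θ e - e) E) (hidx : Set.InjOn idx (↑E)ᶜ)
    (hf : Injective f) (hfθ : ∀ a, f a ∉ E.image θ)
    (hh : Injective h) (hhθ : ∀ a, h a ∉ E.image fun e => θ e - e) :
    IsLatinSquare (prolongation M E θ idx f h) :=
  .of_injective (prolongation_row_injective hM hθ hidx hf hfθ)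
    (prolongation_col_injective hM hθ' hidx hh hhθ)

end Prolongation

/-- On `{e | e.val + 1 < t}` both `skewDouble t` and `e ↦ skewDouble t e - e` are injective (a
partial orthomorphism of `ZMod t`). Plain doubling is a full orthomorphism for odd `t`; for even `t`
none exists, and shifting the upper half by one gives up only `e = t - 1`. -/
def skewDouble (t : ℕ) (e : Fin t) : Fin t :=
  if h : 2 * e.val < t then ⟨2 * e.val, h⟩
  else ⟨2 * e.val - t + (1 - t % 2), by omega⟩

lemma skewDouble_val (t : ℕ) (e : Fin t) :
    (skewDouble t e).val = if 2 * e.val < t then 2 * e.val else 2 * e.val - t + (1 - t % 2) := by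
  unfold skewDouble; split <;> rfl

lemma skewDouble_injective (t : ℕ) : Injective (skewDouble t) := by
  intro a b hab
  have h := congrArg Fin.val hab
  rw [skewDouble_val, skewDouble_val] at h
  ext
  split_ifs at h <;> omega

lemma skewDouble_sub_self_val {t : ℕ} [NeZero t] (e : Fin t) (he : e.val + 1 < t) :
    (skewDouble t e - e).val = if 2 * e.val < t then e.val else e.val + (1 - t % 2) := by
  change (t - e.val + (skewDouble t e).val) % t = _
  rw [skewDouble_val]
  split_ifs
  · rw [show t - e.val + 2 * e.val = e.val + t by omega, Nat.add_mod_right, Nat.mod_eq_of_lt e.isLt]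
  · rw [show t - e.val + (2 * e.val - t + (1 - t % 2)) = e.val + (1 - t % 2) by omega,
      Nat.mod_eq_of_lt (by omega)]

lemma injOn_skewDouble_sub_self {t : ℕ} [NeZero t] :
    Set.InjOn (fun e => skewDouble t e - e) {e : Fin t | e.val + 1 < t} := by
  intro a ha b hb hab
  have h := congrArg Fin.val hab
  simp only [skewDouble_sub_self_val a ha, skewDouble_sub_self_val b hb] at h
  ext
  split_ifs at h <;> omega

lemma exists_embedding_forall_notMem {G : Type*} [Fintype G] [DecidableEq G] {c : ℕ}
    (s : Finset G) (hs : s.card + c ≤ Fintype.card G) : ∃ f : Fin c ↪ G, ∀ a, f a ∉ s := by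
  obtain ⟨g⟩ := Embedding.nonempty_of_card_le (α := Fin c) (β := ↥sᶜ)
    (by rw [Fintype.card_fin, Fintype.card_coe, Finset.card_compl]; omega)
  exact ⟨g.trans (.subtype _), fun a => Finset.mem_compl.mp (g a).2⟩

lemma hasLatinSubcube_of_pos_of_le {t c : ℕ} (hc : 0 < c) (hct : c ≤ t) :
    HasLatinSubcube (t + c) c := by
  have : NeZero t := ⟨by omega⟩
  let E := Finset.Iio (⟨t - c, by omega⟩ : Fin t)
  have hmem : ∀ e, e ∈ E ↔ e.val < t - c := fun e => by simp [E, Fin.lt_def]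
  have hcard : E.card + c = Fintype.card (Fin t) := by simp [E]; omega
  have hθ : Set.InjOn (skewDouble t) E := (skewDouble_injective t).injOn
  have hθ' : Set.InjOn (fun e => skewDouble t e - e) E :=
    injOn_skewDouble_sub_self.mono fun e he => by
      have := (hmem e).1 he
      show e.val + 1 < t
      omega
  have hidx : Set.InjOn (fun e : Fin t => (⟨e.val - (t - c), by omega⟩ : Fin c)) (↑E)ᶜ := by
    intro a ha b hb hab
    simp only [Set.mem_compl_iff, Finset.mem_coe, hmem, Fin.ext_iff] at ha hb hab
    omega
  obtain ⟨f, hf⟩ := exists_embedding_forall_notMem (c := c) (E.image (skewDouble t))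
    (by rw [Finset.card_image_of_injOn hθ]; omega)
  obtain ⟨h, hh⟩ := exists_embedding_forall_notMem (c := c) (E.image fun e => skewDouble t e - e)
    (by rw [Finset.card_image_of_injOn hθ']; omega)
  exact hasLatinSubcube_of_isLatinSquare ((Equiv.sumComm _ _).trans finSumFinEquiv)
    (isLatinSquare_prolongation (isLatinSquare_fin_add c) hθ hθ' hidx f.injective hf
      h.injective hh)
    (isLatinSquare_fin_add c) .inl fun _ _ => rfl

/-- a latin cube of order `t+c` with a subcube of order `c` exists
iff `c ≤ t` (the case `c = t + c` being trivially true). -/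
theorem cube_with_subcube_iff (t c : ℕ) :
    (∃ C : Fin (t + c) → Fin (t + c) → Fin (t + c) → Fin (t + c),
      IsLatinCube C ∧
      ∃ (rows cols files syms : Fin c ↪ Fin (t + c))
        (S : Fin c → Fin c → Fin c → Fin c),
        IsLatinCube S ∧
        ∀ x y z, C (rows x) (cols y) (files z) = syms (S x y z)) ↔
    (c ≤ t ∨ c = t + c) := by
  change HasLatinSubcube (t + c) c ↔ _
  constructor
  · intro h
    rcases Nat.eq_zero_or_pos c with rfl | hc
    · exact .inl (Nat.zero_le t)
    rcases Nat.eq_zero_or_pos t with rfl | ht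
    · exact .inr (zero_add c).symm
    have := h.two_mul_le hc (by omega)
    exact .inl (by omega)
  · rintro (hct | hct)
    · rcases Nat.eq_zero_or_pos c with rfl | hc
      · exact hasLatinSubcube_zero t
      · exact hasLatinSubcube_of_pos_of_le hc hct
    · obtain rfl : t = 0 := by omega
      rw [zero_add]
      exact hasLatinSubcube_self c
end

section
/- If there exists a latin cube of order n with pairwise disjoint subcubes of orders h₁, …, h_k (where h₁ + ⋯ + h_k = n), then for any integer t ≥ 1 there exists a latin cube of order t·n with pairwise disjoint subcubes of orders t·h₁, …, t·h_k. -/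
/-- A system of pairwise disjoint subcubes of orders `h 0, …, h (k-1)`
inside a cube `C` of order `n`: for each `i` there are `h i` rows, columns,
files and symbols such that the corresponding subarray is a latin cube on
those symbols, and distinct subcubes share no layers and no symbols. -/
structure SubcubeSystem {n : ℕ} (C : Fin n → Fin n → Fin n → Fin n)
    (k : ℕ) (h : Fin k → ℕ) where
  rows : (i : Fin k) → Fin (h i) ↪ Fin n
  cols : (i : Fin k) → Fin (h i) ↪ Fin n
  files : (i : Fin k) → Fin (h i) ↪ Fin n
  syms : (i : Fin k) → Fin (h i) ↪ Fin n
  sub : (i : Fin k) → Fin (h i) → Fin (h i) → Fin (h i) → Fin (h i)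
  sub_latin : ∀ i, IsLatinCube (sub i)
  entry : ∀ i x y z, C (rows i x) (cols i y) (files i z) = syms i (sub i x y z)
  rows_disj : ∀ i j, i ≠ j → Disjoint (Set.range ⇑(rows i)) (Set.range ⇑(rows j))
  cols_disj : ∀ i j, i ≠ j → Disjoint (Set.range ⇑(cols i)) (Set.range ⇑(cols j))
  files_disj : ∀ i j, i ≠ j → Disjoint (Set.range ⇑(files i)) (Set.range ⇑(files j))
  syms_disj : ∀ i j, i ≠ j → Disjoint (Set.range ⇑(syms i)) (Set.range ⇑(syms j))

/-- `HasLC k h`: there is a latin cube of order `∑ i, h i` with pairwise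
disjoint subcubes of orders `h 0, …, h (k-1)` (a 3-realization). -/
def HasLC (k : ℕ) (h : Fin k → ℕ) : Prop :=
  ∃ C : Fin (∑ i, h i) → Fin (∑ i, h i) → Fin (∑ i, h i) → Fin (∑ i, h i),
    IsLatinCube C ∧ Nonempty (SubcubeSystem C k h)

section Aux

variable {t : ℕ} [NeZero t] {α β : Type*}

/-- The inflated cube, generically. -/
def inflCube (e : α ≃ Fin t × β) (c : β → β → β → β) : α → α → α → α :=
  fun x y z => e.symm ((e x).1 + (e y).1 + (e z).1, c (e x).2 (e y).2 (e z).2)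

lemma inflCube_latin (e : α ≃ Fin t × β) {c : β → β → β → β}
    (h1 : ∀ i j, Function.Bijective fun z => c i j z)
    (h2 : ∀ i k, Function.Bijective fun j => c i j k)
    (h3 : ∀ j k, Function.Bijective fun i => c i j k) :
    (∀ i j, Function.Bijective fun z => inflCube e c i j z) ∧
    (∀ i k, Function.Bijective fun j => inflCube e c i j k) ∧
    (∀ j k, Function.Bijective fun i => inflCube e c i j k) := by
  refine ⟨fun i j => ?_, fun i k => ?_, fun j k => ?_⟩
  · have hb : Function.Bijective
        (Prod.map (fun a : Fin t => (e i).1 + (e j).1 + a) (c (e i).2 (e j).2)) :=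
      (Equiv.addLeft ((e i).1 + (e j).1)).bijective.prodMap (h1 _ _)
    exact (e.symm.bijective.comp hb).comp e.bijective
  · have hb : Function.Bijective
        (Prod.map (fun a : Fin t => (e i).1 + a + (e k).1)
          (fun b => c (e i).2 b (e k).2)) :=
      ((Equiv.addLeft (e i).1).trans (Equiv.addRight (e k).1)).bijective.prodMap (h2 _ _)
    exact (e.symm.bijective.comp hb).comp e.bijective
  · have hb : Function.Bijective
        (Prod.map (fun a : Fin t => a + (e j).1 + (e k).1)
          (fun b => c b (e j).2 (e k).2)) :=
      ((Equiv.addRight (e j).1).trans (Equiv.addRight (e k).1)).bijective.prodMap (h3 _ _)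
    exact (e.symm.bijective.comp hb).comp e.bijective

end Aux

/-- inflation of a 3-realization by a factor `t`. -/
theorem inflation (k t : ℕ) (ht : 1 ≤ t) (h : Fin k → ℕ)
    (H : HasLC k h) : HasLC k (fun i => t * h i) := by
  haveI : NeZero t := ⟨by omega⟩
  obtain ⟨C, ⟨hC1, hC2, hC3⟩, ⟨S⟩⟩ := H
  have hsum : (∑ i, t * h i) = t * ∑ i, h i := by rw [Finset.mul_sum]
  let E : Fin (∑ i, t * h i) ≃ Fin t × Fin (∑ i, h i) :=
    (finCongr hsum).trans finProdFinEquiv.symm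
  let u : (i : Fin k) → Fin (t * h i) ≃ Fin t × Fin (h i) :=
    fun i => finProdFinEquiv.symm
  -- generic embedding builder
  have emb_inj : ∀ (m : ℕ) (f : Fin m ↪ Fin (∑ i, h i)),
      Function.Injective (fun x : Fin (t * m) =>
        E.symm ((finProdFinEquiv.symm x).1, f (finProdFinEquiv.symm x).2)) := by
    intro m f a b hab
    have hp := E.symm.injective hab
    have h1 := congrArg Prod.fst hp
    have h2 := f.injective (congrArg Prod.snd hp)
    exact finProdFinEquiv.symm.injective (Prod.ext h1 h2)
  let mk : ∀ (m : ℕ), (Fin m ↪ Fin (∑ i, h i)) → (Fin (t * m) ↪ Fin (∑ i, t * h i)) :=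
    fun m f => ⟨fun x => E.symm ((finProdFinEquiv.symm x).1, f (finProdFinEquiv.symm x).2),
      emb_inj m f⟩
  have mk_disj : ∀ (m m' : ℕ) (f : Fin m ↪ Fin (∑ i, h i)) (f' : Fin m' ↪ Fin (∑ i, h i)),
      Disjoint (Set.range ⇑f) (Set.range ⇑f') →
      Disjoint (Set.range ⇑(mk m f)) (Set.range ⇑(mk m' f')) := by
    intro m m' f f' hd
    rw [Set.disjoint_left] at hd ⊢
    rintro _ ⟨a, rfl⟩ ⟨b, hb⟩
    have hp := E.symm.injective hb
    exact hd ⟨(finProdFinEquiv.symm a).2, (congrArg Prod.snd hp).symm⟩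
      ⟨(finProdFinEquiv.symm b).2, rfl⟩
  refine ⟨inflCube E C, inflCube_latin E hC1 hC2 hC3, ⟨?_⟩⟩
  refine
    { rows := fun i => mk (h i) (S.rows i)
      cols := fun i => mk (h i) (S.cols i)
      files := fun i => mk (h i) (S.files i)
      syms := fun i => mk (h i) (S.syms i)
      sub := fun i => inflCube (u i) (S.sub i)
      sub_latin := fun i =>
        inflCube_latin (u i) (S.sub_latin i).1 (S.sub_latin i).2.1 (S.sub_latin i).2.2
      entry := ?_
      rows_disj := fun i j hij => mk_disj _ _ _ _ (S.rows_disj i j hij)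
      cols_disj := fun i j hij => mk_disj _ _ _ _ (S.cols_disj i j hij)
      files_disj := fun i j hij => mk_disj _ _ _ _ (S.files_disj i j hij)
      syms_disj := fun i j hij => mk_disj _ _ _ _ (S.syms_disj i j hij) }
  intro i x y z
  simp only [inflCube, mk, u, Function.Embedding.coeFn_mk, Equiv.apply_symm_apply,
    Equiv.symm_apply_apply]
  rw [S.entry]
end

section
/- For all integers a ≥ 1 and k ≥ 1, there exists a latin cube of order a·k with k pairwise disjoint subcubes each of order a. -/
/-- The canonical equivalence `Fin m ≃ ZMod m`. -/
def finZMod (m : ℕ) [NeZero m] : Fin m ≃ ZMod m where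
  toFun x := ((x : ℕ) : ZMod m)
  invFun y := ⟨y.val, ZMod.val_lt y⟩
  left_inv x := by
    ext
    exact ZMod.val_cast_of_lt x.isLt
  right_inv y := ZMod.natCast_rightInverse y

/-- The cube `r - c + f (mod m)` is latin. -/
lemma latin_aux (m : ℕ) [NeZero m] :
    IsLatinCube (fun r c f : Fin m =>
      (finZMod m).symm (finZMod m r - finZMod m c + finZMod m f)) := by
  set e := finZMod m with he
  refine ⟨?_, ?_, ?_⟩
  · intro i j
    have h : (fun f => e.symm (e i - e j + e f))
        = ⇑(e.trans ((Equiv.addLeft (e i - e j)).trans e.symm)) := rfl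
    rw [h]; exact Equiv.bijective _
  · intro i f
    have h : (fun j => e.symm (e i - e j + e f))
        = ⇑(e.trans ((Equiv.subLeft (e i + e f)).trans e.symm)) := by
      funext j
      show e.symm (e i - e j + e f) = e.symm (e i + e f - e j)
      congr 1; ring
    rw [h]; exact Equiv.bijective _
  · intro j f
    have h : (fun i => e.symm (e i - e j + e f))
        = ⇑(e.trans ((Equiv.addRight (e f - e j)).trans e.symm)) := by
      funext i
      show e.symm (e i - e j + e f) = e.symm (e i + (e f - e j))
      congr 1; ring
    rw [h]; exact Equiv.bijective _

lemma lc_aux (k a n : ℕ) (ha : 1 ≤ a) (hk : 1 ≤ k) (hn : n = k * a) :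
    ∃ C : Fin n → Fin n → Fin n → Fin n,
      IsLatinCube C ∧ Nonempty (SubcubeSystem C k fun _ => a) := by
  haveI : NeZero n := ⟨by nlinarith⟩
  haveI : NeZero a := ⟨by omega⟩
  set e := finZMod n with he
  set ea := finZMod a with hea
  -- the bound for block entries
  have hb : ∀ (i : Fin k) (x : Fin a), (i : ℕ) + k * (x : ℕ) < n := by
    intro i x
    have h1 : (i : ℕ) + k * (x : ℕ) < k * (x : ℕ) + k := by
      have := i.isLt; omega
    have h2 : k * ((x : ℕ) + 1) ≤ k * a :=
      Nat.mul_le_mul_left k (Nat.succ_le_of_lt x.isLt)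
    have h3 : k * ((x : ℕ) + 1) = k * (x : ℕ) + k := by ring
    omega
  have hinj : ∀ (i j : Fin k) (x y : Fin a),
      (i : ℕ) + k * (x : ℕ) = (j : ℕ) + k * (y : ℕ) → i = j ∧ x = y := by
    intro i j x y hxy
    have hij : (i : ℕ) = (j : ℕ) := by
      have h1 : ((i : ℕ) + k * (x : ℕ)) % k = (i : ℕ) % k :=
        Nat.add_mul_mod_self_left _ _ _
      have h2 : ((j : ℕ) + k * (y : ℕ)) % k = (j : ℕ) % k :=
        Nat.add_mul_mod_self_left _ _ _
      rw [Nat.mod_eq_of_lt i.isLt] at h1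
      rw [Nat.mod_eq_of_lt j.isLt] at h2
      rw [hxy] at h1
      omega
    have hxy' : (x : ℕ) = (y : ℕ) := by
      have hk' : k * (x : ℕ) = k * (y : ℕ) := by omega
      exact Nat.eq_of_mul_eq_mul_left (by omega) hk'
    exact ⟨Fin.ext hij, Fin.ext hxy'⟩
  -- block embeddings
  refine ⟨fun r c f => e.symm (e r - e c + e f), latin_aux n, ⟨?_⟩⟩
  refine
    { rows := fun i => ⟨fun x => ⟨(i : ℕ) + k * (x : ℕ), hb i x⟩,
        fun x y hxy => (hinj i i x y (congrArg Fin.val hxy)).2⟩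
      cols := fun i => ⟨fun x => ⟨(i : ℕ) + k * (x : ℕ), hb i x⟩,
        fun x y hxy => (hinj i i x y (congrArg Fin.val hxy)).2⟩
      files := fun i => ⟨fun x => ⟨(i : ℕ) + k * (x : ℕ), hb i x⟩,
        fun x y hxy => (hinj i i x y (congrArg Fin.val hxy)).2⟩
      syms := fun i => ⟨fun x => ⟨(i : ℕ) + k * (x : ℕ), hb i x⟩,
        fun x y hxy => (hinj i i x y (congrArg Fin.val hxy)).2⟩
      sub := fun _ x y z => ea.symm (ea x - ea y + ea z)
      sub_latin := fun _ => latin_aux a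
      entry := ?_
      rows_disj := ?_
      cols_disj := ?_
      files_disj := ?_
      syms_disj := ?_ }
  · -- entry
    intro i x y z
    rw [Equiv.symm_apply_eq]
    show ((i : ℕ) + k * (x : ℕ) : ℕ) - ((i : ℕ) + k * (y : ℕ) : ℕ)
        + ((i : ℕ) + k * (z : ℕ) : ℕ)
      = (((i : ℕ) + k * ((ea.symm (ea x - ea y + ea z) : Fin a) : ℕ) : ℕ) : ZMod n)
    set v : ℕ := ((ea.symm (ea x - ea y + ea z) : Fin a) : ℕ) with hv
    have hva : ((v : ℕ) : ZMod a) = ((x : ℕ) : ZMod a) - ((y : ℕ) : ZMod a)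
        + ((z : ℕ) : ZMod a) := by
      rw [hv]
      exact ZMod.natCast_rightInverse _
    have hint : ((v : ℤ) : ZMod a) = (((x : ℕ) : ℤ) - ((y : ℕ) : ℤ)
        + ((z : ℕ) : ℤ) : ℤ) := by
      push_cast
      exact hva
    have hmod : (v : ℤ) ≡ ((x : ℕ) : ℤ) - ((y : ℕ) : ℤ) + ((z : ℕ) : ℤ) [ZMOD a] :=
      (ZMod.intCast_eq_intCast_iff _ _ _).mp hint
    obtain ⟨t, ht⟩ := Int.modEq_iff_dvd.mp hmod
    -- now the goal in ZMod n via integers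
    have key : ((((i : ℕ) + k * (x : ℕ) : ℕ) : ℤ)
          - (((i : ℕ) + k * (y : ℕ) : ℕ) : ℤ)
          + (((i : ℕ) + k * (z : ℕ) : ℕ) : ℤ))
        ≡ (((i : ℕ) + k * v : ℕ) : ℤ) [ZMOD (n : ℤ)] := by
      apply Int.modEq_iff_dvd.mpr
      refine ⟨-t, ?_⟩
      push_cast
      rw [hn]
      push_cast
      linear_combination (-(k : ℤ)) * ht
    have := (ZMod.intCast_eq_intCast_iff _ _ _).mpr key
    push_cast at this ⊢
    convert this using 2
  · intro i j hij
    rw [Set.disjoint_left]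
    rintro t ⟨x, hx⟩ ⟨y, hy⟩
    exact hij (hinj i j x y (by
      have := congrArg Fin.val (hx.trans hy.symm); exact this)).1
  · intro i j hij
    rw [Set.disjoint_left]
    rintro t ⟨x, hx⟩ ⟨y, hy⟩
    exact hij (hinj i j x y (congrArg Fin.val (hx.trans hy.symm))).1
  · intro i j hij
    rw [Set.disjoint_left]
    rintro t ⟨x, hx⟩ ⟨y, hy⟩
    exact hij (hinj i j x y (congrArg Fin.val (hx.trans hy.symm))).1
  · intro i j hij
    rw [Set.disjoint_left]
    rintro t ⟨x, hx⟩ ⟨y, hy⟩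
    exact hij (hinj i j x y (congrArg Fin.val (hx.trans hy.symm))).1

/-- an LC(a^k) exists for all a, k ≥ 1. -/
theorem LC_a_pow_k (a k : ℕ) (ha : 1 ≤ a) (hk : 1 ≤ k) :
    HasLC k (fun _ => a) := by
  have hn : (∑ _i : Fin k, a) = k * a := by
    simp [Finset.sum_const, mul_comm]
  exact lc_aux k a _ ha hk hn
end

section
/- Let k ≥ 3 and a > b ≥ 1. If there exists a latin cube of order a + (k−1)b with one subcube of order a and k−1 pairwise disjoint subcubes of order b (all pairwise disjoint), then a ≤ (k−1)b. -/
/-!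
A subcube of order `m` in a latin cube of order `n > m` forces `2m ≤ n`: pick a file `z` outside
the subcube and a column `y` of it. Every symbol of the subcube already occurs in the line through
row `x` and column `y` inside the subcube's files, so the `m` distinct entries at `(x, y, z)`,
`x` ranging over the subcube's rows, are `m` further symbols. For `LC(a b^{k-1})` the cube has order
`a + (k-1)b > a`, whence `2a ≤ a + (k-1)b`.
-/

section Subcube

variable {n m : ℕ} {C : Fin n → Fin n → Fin n → Fin n} {rows cols files syms : Fin m ↪ Fin n}
  {sub : Fin m → Fin m → Fin m → Fin m}

theorem IsLatinCube.apply_notMem_range_syms (hC : IsLatinCube C) (hsub : IsLatinCube sub)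
    (entry : ∀ x y z, C (rows x) (cols y) (files z) = syms (sub x y z))
    {z : Fin n} (hz : z ∉ Set.range files) (x y : Fin m) :
    C (rows x) (cols y) z ∉ Set.range syms := by
  rintro ⟨s, hs⟩
  obtain ⟨w, rfl⟩ := (hsub.1 x y).surjective s
  exact hz ⟨w, (hC.1 _ _).injective ((entry x y w).trans hs)⟩

theorem IsLatinCube.two_mul_le_of_subcube (hC : IsLatinCube C) (hsub : IsLatinCube sub)
    (entry : ∀ x y z, C (rows x) (cols y) (files z) = syms (sub x y z)) (hmn : m < n) :
    2 * m ≤ n := by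
  obtain ⟨z, hz⟩ : ∃ z, z ∉ Set.range files := by
    by_contra! hfiles
    have := Fintype.card_le_of_surjective files hfiles
    simp only [Fintype.card_fin] at this
    omega
  rcases m.eq_zero_or_pos with rfl | hm
  · simp
  let y : Fin m := ⟨0, hm⟩
  have hinj : Function.Injective fun x => C (rows x) (cols y) z :=
    (hC.2.2 _ z).injective.comp rows.injective
  have hdisj : ∀ x s, C (rows x) (cols y) z ≠ syms s := fun x s hs =>
    hC.apply_notMem_range_syms hsub entry hz x y ⟨s, hs.symm⟩
  simpa [two_mul] using Fintype.card_le_of_injective _ (hinj.sumElim syms.injective hdisj)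

end Subcube

theorem LC_ab_necessary_general (k a b : ℕ) (hk : 3 ≤ k) (hb : 1 ≤ b)
    (H : HasLC k (fun i => if (i : ℕ) = 0 then a else b)) :
    a ≤ (k - 1) * b := by
  obtain ⟨k, rfl⟩ : ∃ k', k = k' + 1 := ⟨k - 1, by omega⟩
  obtain ⟨C, hC, ⟨S⟩⟩ := H
  have horder : ∑ i : Fin (k + 1), (if (i : ℕ) = 0 then a else b) = a + k * b := by
    simp [Fin.sum_univ_succ]
  have hkb : 0 < k * b := Nat.mul_pos (by omega) hb
  have h2a := hC.two_mul_le_of_subcube (S.sub_latin 0) (S.entry 0) (by rw [horder]; simp; omega)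
  simp only [Fin.val_zero, if_true, horder] at h2a
  simp only [Nat.add_sub_cancel]
  omega

/-- if an LC(a b^{k-1}) exists then a ≤ (k-1)b. -/
theorem LC_ab_necessary (k a b : ℕ) (hk : 3 ≤ k) (hb : 1 ≤ b) (hab : b < a)
    (H : HasLC k (fun i => if (i : ℕ) = 0 then a else b)) :
    a ≤ (k - 1) * b :=
  LC_ab_necessary_general k a b hk hb H
end

section
/- Let k ≥ 3 and a > b ≥ 1. If there exists a latin cube of order 2a + (k−2)b with two disjoint subcubes of order a and k−2 pairwise disjoint subcubes of order b (all pairwise disjoint), then a ≤ 2(k−2)b. -/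
namespace LC9aux

open Finset

variable {n : ℕ}

/-- count of triples (x,y,z) ∈ X×Y×Z with C x y z ∈ W -/
def cnt (C : Fin n → Fin n → Fin n → Fin n) (X Y Z W : Finset (Fin n)) : ℕ :=
  ∑ x ∈ X, ∑ y ∈ Y, ∑ z ∈ Z, if C x y z ∈ W then 1 else 0

lemma card_filter_bij {f : Fin n → Fin n} (hf : Function.Bijective f)
    (W : Finset (Fin n)) :
    (Finset.univ.filter fun z => f z ∈ W).card = W.card := by
  apply Finset.card_bij (fun z _ => f z)
  · intro a ha; exact (Finset.mem_filter.mp ha).2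
  · intro a₁ h₁ a₂ h₂ hh; exact hf.1 hh
  · intro w hw
    obtain ⟨z, hz⟩ := hf.2 w
    exact ⟨z, Finset.mem_filter.mpr ⟨Finset.mem_univ _, hz ▸ hw⟩, hz⟩

lemma sum_ite_bij {f : Fin n → Fin n} (hf : Function.Bijective f)
    (W : Finset (Fin n)) :
    (∑ z : Fin n, if f z ∈ W then 1 else 0) = W.card := by
  rw [← Finset.card_filter]
  exact card_filter_bij hf W

variable (C : Fin n → Fin n → Fin n → Fin n)

lemma cnt_z_univ (hC : ∀ x y, Function.Bijective fun z => C x y z)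
    (X Y W : Finset (Fin n)) :
    cnt C X Y Finset.univ W = X.card * (Y.card * W.card) := by
  unfold cnt
  have h1 : ∀ x y, (∑ z : Fin n, if C x y z ∈ W then 1 else 0) = W.card :=
    fun x y => sum_ite_bij (hC x y) W
  simp only [h1, Finset.sum_const, smul_eq_mul, mul_assoc]

lemma cnt_x_univ (hC : ∀ y z, Function.Bijective fun x => C x y z)
    (Y Z W : Finset (Fin n)) :
    cnt C Finset.univ Y Z W = Y.card * (Z.card * W.card) := by
  unfold cnt
  rw [Finset.sum_comm]
  have h2 : ∀ y ∈ Y, (∑ x : Fin n, ∑ z ∈ Z, if C x y z ∈ W then 1 else 0)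
      = ∑ z ∈ Z, ∑ x : Fin n, (if C x y z ∈ W then 1 else 0) :=
    fun y _ => Finset.sum_comm
  rw [Finset.sum_congr rfl h2]
  have h1 : ∀ y z, (∑ x : Fin n, if C x y z ∈ W then 1 else 0) = W.card :=
    fun y z => sum_ite_bij (hC y z) W
  simp only [h1, Finset.sum_const, smul_eq_mul, mul_assoc]

lemma cnt_w_univ (X Y Z : Finset (Fin n)) :
    cnt C X Y Z Finset.univ = X.card * (Y.card * Z.card) := by
  simp [cnt, Finset.sum_const, smul_eq_mul, mul_assoc]

lemma cnt_x_union {X₁ X₂ : Finset (Fin n)} (hd : Disjoint X₁ X₂)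
    (Y Z W : Finset (Fin n)) :
    cnt C (X₁ ∪ X₂) Y Z W = cnt C X₁ Y Z W + cnt C X₂ Y Z W := by
  simp only [cnt, Finset.sum_union hd]

lemma cnt_z_union {Z₁ Z₂ : Finset (Fin n)} (hd : Disjoint Z₁ Z₂)
    (X Y W : Finset (Fin n)) :
    cnt C X Y (Z₁ ∪ Z₂) W = cnt C X Y Z₁ W + cnt C X Y Z₂ W := by
  simp only [cnt, Finset.sum_union hd, Finset.sum_add_distrib]

lemma cnt_w_union {W₁ W₂ : Finset (Fin n)} (hd : Disjoint W₁ W₂)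
    (X Y Z : Finset (Fin n)) :
    cnt C X Y Z (W₁ ∪ W₂) = cnt C X Y Z W₁ + cnt C X Y Z W₂ := by
  have key : ∀ s : Fin n, (if s ∈ W₁ ∪ W₂ then 1 else 0)
      = (if s ∈ W₁ then 1 else 0) + (if s ∈ W₂ then 1 else 0) := by
    intro s
    by_cases h1 : s ∈ W₁
    · have h2 : s ∉ W₂ := Finset.disjoint_left.mp hd h1
      simp [h1, h2]
    · by_cases h2 : s ∈ W₂ <;> simp [h1, h2]
  simp only [cnt, key, Finset.sum_add_distrib]

lemma cnt_vanish (hC : IsLatinCube C) {k : ℕ} {h : Fin k → ℕ}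
    (S : SubcubeSystem C k h) (t : Fin k) (Y : Finset (Fin n))
    (hY : ∀ y ∈ Y, y ∉ Finset.univ.image ⇑(S.cols t)) :
    cnt C (Finset.univ.image ⇑(S.rows t)) Y (Finset.univ.image ⇑(S.files t))
      (Finset.univ.image ⇑(S.syms t)) = 0 := by
  refine Finset.sum_eq_zero fun x hx => Finset.sum_eq_zero fun y hy =>
    Finset.sum_eq_zero fun z hz => ?_
  rw [if_neg]
  intro hmem
  obtain ⟨p, -, hp⟩ := Finset.mem_image.mp hx
  obtain ⟨q, -, hq⟩ := Finset.mem_image.mp hz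
  obtain ⟨w, -, hw⟩ := Finset.mem_image.mp hmem
  obtain ⟨y', hy'⟩ := ((S.sub_latin t).2.1 p q).2 w
  have hy'' : S.sub t p y' q = w := hy'
  have hkey : C x (S.cols t y') z = C x y z := by
    rw [← hp, ← hq, S.entry, hy'', hp, hq, hw]
  have := (hC.2.1 x z).1 hkey
  exact hY y hy (Finset.mem_image.mpr ⟨y', Finset.mem_univ _, this⟩)

theorem main_aux {k : ℕ} {h : Fin k → ℕ} (C : Fin n → Fin n → Fin n → Fin n)
    (hC : IsLatinCube C) (S : SubcubeSystem C k h) (i0 i1 : Fin k)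
    (hne : i0 ≠ i1) (a m : ℕ) (h0 : h i0 = a) (h1 : h i1 = a)
    (hn : n = a + a + m) (ha : 0 < a) (hm : 0 < m) : a ≤ 2 * m := by
  classical
  set R0 : Finset (Fin n) := Finset.univ.image ⇑(S.rows i0) with hR0
  set R1 : Finset (Fin n) := Finset.univ.image ⇑(S.rows i1) with hR1
  set C0 : Finset (Fin n) := Finset.univ.image ⇑(S.cols i0) with hC0
  set C1 : Finset (Fin n) := Finset.univ.image ⇑(S.cols i1) with hC1
  set F0 : Finset (Fin n) := Finset.univ.image ⇑(S.files i0) with hF0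
  set F1 : Finset (Fin n) := Finset.univ.image ⇑(S.files i1) with hF1
  set S0 : Finset (Fin n) := Finset.univ.image ⇑(S.syms i0) with hS0
  set S1 : Finset (Fin n) := Finset.univ.image ⇑(S.syms i1) with hS1
  set Ru : Finset (Fin n) := Finset.univ \ (R0 ∪ R1) with hRu
  set Cu : Finset (Fin n) := Finset.univ \ (C0 ∪ C1) with hCu
  set Fu : Finset (Fin n) := Finset.univ \ (F0 ∪ F1) with hFu
  set Su : Finset (Fin n) := Finset.univ \ (S0 ∪ S1) with hSu
  -- disjointness of finsets from set-range disjointness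
  have range_eq : ∀ (j : Fin k) (e : Fin (h j) ↪ Fin n),
      Set.range ⇑e = ↑(Finset.univ.image ⇑e) := by
    intro j e; simp
  have dR01 : Disjoint R0 R1 := by
    rw [← Finset.disjoint_coe]
    rw [hR0, hR1, ← range_eq i0, ← range_eq i1]
    exact S.rows_disj i0 i1 hne
  have dC01 : Disjoint C0 C1 := by
    rw [← Finset.disjoint_coe, hC0, hC1, ← range_eq i0, ← range_eq i1]
    exact S.cols_disj i0 i1 hne
  have dF01 : Disjoint F0 F1 := by
    rw [← Finset.disjoint_coe, hF0, hF1, ← range_eq i0, ← range_eq i1]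
    exact S.files_disj i0 i1 hne
  have dS01 : Disjoint S0 S1 := by
    rw [← Finset.disjoint_coe, hS0, hS1, ← range_eq i0, ← range_eq i1]
    exact S.syms_disj i0 i1 hne
  -- cardinalities
  have cimg : ∀ (j : Fin k) (e : Fin (h j) ↪ Fin n),
      (Finset.univ.image ⇑e).card = h j := by
    intro j e
    rw [Finset.card_image_of_injective _ e.injective, Finset.card_univ,
      Fintype.card_fin]
  have cR0 : R0.card = a := by rw [hR0, cimg, h0]
  have cR1 : R1.card = a := by rw [hR1, cimg, h1]
  have cC0 : C0.card = a := by rw [hC0, cimg, h0]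
  have cC1 : C1.card = a := by rw [hC1, cimg, h1]
  have cF0 : F0.card = a := by rw [hF0, cimg, h0]
  have cF1 : F1.card = a := by rw [hF1, cimg, h1]
  have cS0 : S0.card = a := by rw [hS0, cimg, h0]
  have cS1 : S1.card = a := by rw [hS1, cimg, h1]
  have cCu : Cu.card = m := by
    rw [hCu, Finset.card_sdiff_of_subset (Finset.subset_univ _),
      Finset.card_union_of_disjoint dC01, cC0, cC1, Finset.card_univ,
      Fintype.card_fin, hn]
    omega
  have cFu : Fu.card = m := by
    rw [hFu, Finset.card_sdiff_of_subset (Finset.subset_univ _),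
      Finset.card_union_of_disjoint dF01, cF0, cF1, Finset.card_univ,
      Fintype.card_fin, hn]
    omega
  have cSu : Su.card = m := by
    rw [hSu, Finset.card_sdiff_of_subset (Finset.subset_univ _),
      Finset.card_union_of_disjoint dS01, cS0, cS1, Finset.card_univ,
      Fintype.card_fin, hn]
    omega
  -- partitions of univ
  have uR : (Finset.univ : Finset (Fin n)) = (R0 ∪ R1) ∪ Ru := by
    rw [hRu, Finset.union_sdiff_of_subset (Finset.subset_univ _)]
  have uF : (Finset.univ : Finset (Fin n)) = (F0 ∪ F1) ∪ Fu := by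
    rw [hFu, Finset.union_sdiff_of_subset (Finset.subset_univ _)]
  have uS : (Finset.univ : Finset (Fin n)) = (S0 ∪ S1) ∪ Su := by
    rw [hSu, Finset.union_sdiff_of_subset (Finset.subset_univ _)]
  have dRu : Disjoint (R0 ∪ R1) Ru := Finset.disjoint_sdiff
  have dFu : Disjoint (F0 ∪ F1) Fu := Finset.disjoint_sdiff
  have dSu : Disjoint (S0 ∪ S1) Su := Finset.disjoint_sdiff
  -- vanishing counts
  have hCuY : ∀ t ∈ ({i0, i1} : Finset (Fin k)), ∀ y ∈ Cu,
      y ∉ Finset.univ.image ⇑(S.cols t) := by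
    intro t ht y hy
    rw [hCu, Finset.mem_sdiff] at hy
    intro hmem
    apply hy.2
    rw [Finset.mem_union]
    rcases Finset.mem_insert.mp ht with h' | h'
    · left; rw [hC0]; exact h' ▸ hmem
    · right; rw [hC1]; exact (Finset.mem_singleton.mp h') ▸ hmem
  have v0 : cnt C R0 Cu F0 S0 = 0 := by
    rw [hR0, hF0, hS0]
    exact cnt_vanish C hC S i0 Cu (hCuY i0 (by simp))
  have v1 : cnt C R1 Cu F1 S1 = 0 := by
    rw [hR1, hF1, hS1]
    exact cnt_vanish C hC S i1 Cu (hCuY i1 (by simp))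
  -- the five equations
  have e1 : cnt C R0 Cu F0 S1 + cnt C R1 Cu F0 S1 + cnt C Ru Cu F0 S1
      = m * (a * a) := by
    have h' := cnt_x_univ C hC.2.2 Cu F0 S1
    rw [uR, cnt_x_union C dRu, cnt_x_union C dR01, cCu, cF0, cS1] at h'
    linarith [h']
  have e2 : cnt C R0 Cu F0 Su + cnt C R0 Cu F1 Su + cnt C R0 Cu Fu Su
      = a * (m * m) := by
    have h' := cnt_z_univ C hC.1 R0 Cu Su
    rw [uF, cnt_z_union C dFu, cnt_z_union C dF01, cR0, cCu, cSu] at h'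
    linarith [h']
  have e3 : cnt C R1 Cu F0 S1 + cnt C R1 Cu Fu S1 = a * (m * a) := by
    have h' := cnt_z_univ C hC.1 R1 Cu S1
    rw [uF, cnt_z_union C dFu, cnt_z_union C dF01, cR1, cCu, cS1, v1] at h'
    linarith [h']
  have e4 : cnt C R0 Cu F0 S1 + cnt C R0 Cu F0 Su = a * (m * a) := by
    have h' := cnt_w_univ C R0 Cu F0
    rw [uS, cnt_w_union C dSu, cnt_w_union C dS01, cR0, cCu, cF0, v0] at h'
    linarith [h']
  have e5 : cnt C R1 Cu Fu S0 + cnt C R1 Cu Fu S1 + cnt C R1 Cu Fu Su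
      = a * (m * m) := by
    have h' := cnt_w_univ C R1 Cu Fu
    rw [uS, cnt_w_union C dSu, cnt_w_union C dS01, cR1, cCu, cFu] at h'
    linarith [h']
  -- combine
  have hring : m * (a * a) = a * (m * a) := by ring
  have hineq : m * (a * a) ≤ 2 * (a * (m * m)) := by linarith
  have h2 : (a * m) * a ≤ (a * m) * (2 * m) := by
    have eL : (a * m) * a = m * (a * a) := by ring
    have eR : (a * m) * (2 * m) = 2 * (a * (m * m)) := by ring
    rw [eL, eR]; exact hineq
  exact Nat.le_of_mul_le_mul_left h2 (Nat.mul_pos ha hm)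

end LC9aux

/-- if an LC(a² b^{k-2}) exists then a ≤ 2(k-2)b. -/
theorem LC_aab_necessary (k a b : ℕ) (hk : 3 ≤ k) (hb : 1 ≤ b) (hab : b < a)
    (H : HasLC k (fun i => if (i : ℕ) < 2 then a else b)) :
    a ≤ 2 * ((k - 2) * b) := by
  obtain ⟨C, hC, ⟨S⟩⟩ := H
  have hk2 : 2 ≤ k := by omega
  have hsum : (∑ i : Fin k, if (i : ℕ) < 2 then a else b)
      = a + a + (k - 2) * b := by
    rw [Fin.sum_univ_eq_sum_range (fun i => if i < 2 then a else b) k]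
    rw [Finset.range_eq_Ico, ← Finset.sum_Ico_consecutive _ (Nat.zero_le 2) hk2]
    have h1 : (∑ i ∈ Finset.Ico 0 2, if i < 2 then a else b) = a + a := by
      rw [← Finset.range_eq_Ico]
      simp [Finset.sum_range_succ]
    have h2 : (∑ i ∈ Finset.Ico 2 k, if i < 2 then a else b) = (k - 2) * b := by
      rw [Finset.sum_congr rfl (fun i hi => if_neg (by
        have := (Finset.mem_Ico.mp hi).1; omega))]
      rw [Finset.sum_const, Nat.card_Ico, smul_eq_mul]
    rw [h1, h2]
  exact LC9aux.main_aux C hC S ⟨0, by omega⟩ ⟨1, by omega⟩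
    (by simp [Fin.ext_iff]) a ((k - 2) * b)
    (by norm_num) (by norm_num) hsum (by omega)
    (Nat.mul_pos (by omega) hb)
end

section
/- Every finite bipartite multigraph (no loops, repeated edges allowed) admits an equitable edge-colouring with k colours for each k ≥ 1: a partition of the edge set into colour classes C₁, …, C_k such that for every vertex v and all colours i, j, the numbers of edges at v in Cᵢ and C_j differ by at most 1. -/
open Finset

lemma sum_split {E : Type} [Fintype E] [DecidableEq E] (e₀ : E) (f : E → ℤ) :
    ∑ e : E, f e = (∑ e : {x : E // x ≠ e₀}, f e.val) + f e₀ := by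
  have h := Finset.sum_erase_add Finset.univ f (Finset.mem_univ e₀)
  rw [← h]
  congr 1
  exact Finset.sum_subtype (p := fun x => x ≠ e₀) (Finset.univ.erase e₀)
    (fun x => by simp [Finset.mem_erase]) f

lemma balanced_orient (n : ℕ) : ∀ (E : Type) [Fintype E] [DecidableEq E]
    (V : Type) [DecidableEq V] (p : E → V × V), Fintype.card E ≤ n →
    ∃ o : E → V × V, (∀ e, o e = p e ∨ o e = (p e).swap) ∧
      ∀ v : V, |(∑ e : E, if (o e).1 = v then (1:ℤ) else 0) -
        (∑ e : E, if (o e).2 = v then (1:ℤ) else 0)| ≤ 1 := by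
  induction n with
  | zero =>
    intro E _ _ V _ p hcard
    have : IsEmpty E := Fintype.card_eq_zero_iff.mp (Nat.le_zero.mp hcard)
    exact ⟨p, fun e => Or.inl rfl, fun v => by simp⟩
  | succ n IH =>
    intro E _ _ V _ p hcard
    by_cases hL : ∃ e : E, (p e).1 = (p e).2
    · -- remove a loop
      obtain ⟨e₀, he₀⟩ := hL
      have hcard' : Fintype.card {x : E // x ≠ e₀} ≤ n := by
        have h1 : Fintype.card {x : E // x ≠ e₀} < Fintype.card E :=
          Fintype.card_subtype_lt (x := e₀) (by simp)
        omega
      obtain ⟨o', hflip', hbal'⟩ := IH {x : E // x ≠ e₀} V (fun z => p z.val) hcard'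
      refine ⟨fun e => if h : e = e₀ then p e₀ else o' ⟨e, h⟩, ?_, ?_⟩
      · intro e
        by_cases h : e = e₀
        · subst h; simp
        · simpa [h] using hflip' ⟨e, h⟩
      · intro u
        have hout : (∑ e : E, if (((fun e => if h : e = e₀ then p e₀ else o' ⟨e, h⟩) e).1 = u) then (1:ℤ) else 0)
            = (∑ z : {x : E // x ≠ e₀}, if ((o' z).1 = u) then (1:ℤ) else 0) + (if ((p e₀).1 = u) then 1 else 0) := by
          rw [sum_split e₀]
          simp only [dif_pos rfl]
          congr 1
          refine Finset.sum_congr rfl fun z _ => ?_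
          have hz : (if h : (z:E) = e₀ then p e₀ else o' ⟨(z:E), h⟩) = o' z := by
            rw [dif_neg z.prop]
          simp only [hz]
        have hin : (∑ e : E, if (((fun e => if h : e = e₀ then p e₀ else o' ⟨e, h⟩) e).2 = u) then (1:ℤ) else 0)
            = (∑ z : {x : E // x ≠ e₀}, if ((o' z).2 = u) then (1:ℤ) else 0) + (if ((p e₀).2 = u) then 1 else 0) := by
          rw [sum_split e₀]
          simp only [dif_pos rfl]
          congr 1
          refine Finset.sum_congr rfl fun z _ => ?_
          have hz : (if h : (z:E) = e₀ then p e₀ else o' ⟨(z:E), h⟩) = o' z := by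
            rw [dif_neg z.prop]
          simp only [hz]
        rw [hout, hin, he₀, add_sub_add_right_eq_sub]
        exact hbal' u
    · by_cases hP : ∃ (e₁ e₂ : E) (v : V), e₁ ≠ e₂ ∧
          ((p e₁).1 = v ∨ (p e₁).2 = v) ∧ ((p e₂).1 = v ∨ (p e₂).2 = v)
      · obtain ⟨e₁, e₂, v, hne, hv1, hv2⟩ := hP
        have hcard' : Fintype.card {z : E // z ≠ e₂} ≤ n := by
          have h1 : Fintype.card {z : E // z ≠ e₂} < Fintype.card E :=
            Fintype.card_subtype_lt (x := e₂) (by simp)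
          omega
        set x := if (p e₁).1 = v then (p e₁).2 else (p e₁).1 with hxdef
        set y := if (p e₂).1 = v then (p e₂).2 else (p e₂).1 with hydef
        have hpe₁ : p e₁ = (v, x) ∨ p e₁ = (x, v) := by
          by_cases h : (p e₁).1 = v
          · left; rw [hxdef, if_pos h]; exact Prod.ext h rfl
          · right; rw [hxdef, if_neg h]
            exact Prod.ext rfl (hv1.resolve_left h)
        have hpe₂ : p e₂ = (v, y) ∨ p e₂ = (y, v) := by
          by_cases h : (p e₂).1 = v
          · left; rw [hydef, if_pos h]; exact Prod.ext h rfl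
          · right; rw [hydef, if_neg h]
            exact Prod.ext rfl (hv2.resolve_left h)
        obtain ⟨o', hflip', hbal'⟩ := IH {z : E // z ≠ e₂} V
          (fun z => if z = (⟨e₁, hne⟩ : {z : E // z ≠ e₂}) then (x, y) else p z.val) hcard'
        have hfe : o' ⟨e₁, hne⟩ = (x, y) ∨ o' ⟨e₁, hne⟩ = (y, x) := by
          simpa using hflip' ⟨e₁, hne⟩
        have hoth : ∀ z : {z : E // z ≠ e₂}, z.val ≠ e₁ → (o' z = p z.val ∨ o' z = (p z.val).swap) := by
          intro z hz
          have hne1 : z ≠ (⟨e₁, hne⟩ : {z : E // z ≠ e₂}) := by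
            simp [Subtype.ext_iff, hz]
          simpa [hne1] using hflip' z
        rcases hfe with hb | hb
        · set o : E → V × V :=
            fun e => if h2 : e = e₂ then (v, y) else if e = e₁ then (x, v) else o' ⟨e, h2⟩ with hodef
          have he₂v : o e₂ = (v, y) := by simp [hodef]
          have he₁v : o e₁ = (x, v) := by simp [hodef, hne]
          have hov : ∀ z : {z : E // z ≠ e₂}, z.val ≠ e₁ → o z.val = o' z := by
            intro z hz; simp [hodef, z.prop, hz]
          refine ⟨o, ?_, ?_⟩
          · intro e
            by_cases h2 : e = e₂
            · subst h2
              rw [he₂v]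
              rcases hpe₂ with h | h <;> rw [h]
              · exact Or.inl rfl
              · exact Or.inr rfl
            · by_cases h1 : e = e₁
              · subst h1
                rw [he₁v]
                rcases hpe₁ with h | h <;> rw [h]
                · exact Or.inr rfl
                · exact Or.inl rfl
              · rw [hov ⟨e, h2⟩ h1]
                exact hoth ⟨e, h2⟩ h1
          · intro u
            have hout : (∑ e : E, if (o e).1 = u then (1:ℤ) else 0)
                = (∑ z : {z : E // z ≠ e₂}, if (o' z).1 = u then (1:ℤ) else 0)
                  + (if v = u then 1 else 0) := by
              rw [sum_split e₂, he₂v]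
              congr 1
              refine Finset.sum_congr rfl fun z _ => ?_
              by_cases hz : z.val = e₁
              · have hz' : z = ⟨e₁, hne⟩ := Subtype.ext hz
                subst hz'
                simp [he₁v, hb]
              · simp only [hov z hz]
            have hin : (∑ e : E, if (o e).2 = u then (1:ℤ) else 0)
                = (∑ z : {z : E // z ≠ e₂}, if (o' z).2 = u then (1:ℤ) else 0)
                  + (if v = u then 1 else 0) := by
              rw [sum_split e₂, he₂v,
                sum_split (⟨e₁, hne⟩ : {z : E // z ≠ e₂}) (fun z => if (o z.val).2 = u then (1:ℤ) else 0),
                sum_split (⟨e₁, hne⟩ : {z : E // z ≠ e₂}) (fun z => if (o' z).2 = u then (1:ℤ) else 0)]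
              have hS : (∑ w : {w : {z : E // z ≠ e₂} // w ≠ ⟨e₁, hne⟩},
                    if (o w.val.val).2 = u then (1:ℤ) else 0)
                  = ∑ w : {w : {z : E // z ≠ e₂} // w ≠ ⟨e₁, hne⟩},
                    if (o' w.val).2 = u then (1:ℤ) else 0 := by
                refine Finset.sum_congr rfl fun w _ => ?_
                have hw : (w.val : E) ≠ e₁ := fun h => w.prop (Subtype.ext h)
                simp only [hov w.val hw]
              rw [hS]
              simp only [he₁v, hb]
              ring
            rw [hout, hin, add_sub_add_right_eq_sub]
            exact hbal' u
        · set o : E → V × V :=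
            fun e => if h2 : e = e₂ then (y, v) else if e = e₁ then (v, x) else o' ⟨e, h2⟩ with hodef
          have he₂v : o e₂ = (y, v) := by simp [hodef]
          have he₁v : o e₁ = (v, x) := by simp [hodef, hne]
          have hov : ∀ z : {z : E // z ≠ e₂}, z.val ≠ e₁ → o z.val = o' z := by
            intro z hz; simp [hodef, z.prop, hz]
          refine ⟨o, ?_, ?_⟩
          · intro e
            by_cases h2 : e = e₂
            · subst h2
              rw [he₂v]
              rcases hpe₂ with h | h <;> rw [h]
              · exact Or.inr rfl
              · exact Or.inl rfl
            · by_cases h1 : e = e₁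
              · subst h1
                rw [he₁v]
                rcases hpe₁ with h | h <;> rw [h]
                · exact Or.inl rfl
                · exact Or.inr rfl
              · rw [hov ⟨e, h2⟩ h1]
                exact hoth ⟨e, h2⟩ h1
          · intro u
            have hout : (∑ e : E, if (o e).1 = u then (1:ℤ) else 0)
                = (∑ z : {z : E // z ≠ e₂}, if (o' z).1 = u then (1:ℤ) else 0)
                  + (if v = u then 1 else 0) := by
              rw [sum_split e₂, he₂v,
                sum_split (⟨e₁, hne⟩ : {z : E // z ≠ e₂}) (fun z => if (o z.val).1 = u then (1:ℤ) else 0),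
                sum_split (⟨e₁, hne⟩ : {z : E // z ≠ e₂}) (fun z => if (o' z).1 = u then (1:ℤ) else 0)]
              have hS : (∑ w : {w : {z : E // z ≠ e₂} // w ≠ ⟨e₁, hne⟩},
                    if (o w.val.val).1 = u then (1:ℤ) else 0)
                  = ∑ w : {w : {z : E // z ≠ e₂} // w ≠ ⟨e₁, hne⟩},
                    if (o' w.val).1 = u then (1:ℤ) else 0 := by
                refine Finset.sum_congr rfl fun w _ => ?_
                have hw : (w.val : E) ≠ e₁ := fun h => w.prop (Subtype.ext h)
                simp only [hov w.val hw]
              rw [hS]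
              simp only [he₁v, hb]
              ring
            have hin : (∑ e : E, if (o e).2 = u then (1:ℤ) else 0)
                = (∑ z : {z : E // z ≠ e₂}, if (o' z).2 = u then (1:ℤ) else 0)
                  + (if v = u then 1 else 0) := by
              rw [sum_split e₂, he₂v]
              congr 1
              refine Finset.sum_congr rfl fun z _ => ?_
              by_cases hz : z.val = e₁
              · have hz' : z = ⟨e₁, hne⟩ := Subtype.ext hz
                subst hz'
                simp [he₁v, hb]
              · simp only [hov z hz]
            rw [hout, hin, add_sub_add_right_eq_sub]
            exact hbal' u
      · refine ⟨p, fun e => Or.inl rfl, ?_⟩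
        intro u
        by_cases hex : ∃ e : E, (p e).1 = u ∨ (p e).2 = u
        · obtain ⟨e₀, he₀⟩ := hex
          have h1 : ∀ e : E, e ≠ e₀ → ¬((p e).1 = u ∨ (p e).2 = u) :=
            fun e hne hc => hP ⟨e, e₀, u, hne, hc, he₀⟩
          have hzero : ∀ z : {z : E // z ≠ e₀},
              ((p z.val).1 ≠ u ∧ (p z.val).2 ≠ u) := by
            intro z
            have := h1 z.val z.prop
            exact not_or.mp this
          have hs1 : (∑ e : E, if (p e).1 = u then (1:ℤ) else 0)
              = if (p e₀).1 = u then 1 else 0 := by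
            rw [sum_split e₀]
            have hz : (∑ z : {z : E // z ≠ e₀}, if (p z.val).1 = u then (1:ℤ) else 0) = 0 :=
              Finset.sum_eq_zero fun z _ => by simp [(hzero z).1]
            rw [hz, zero_add]
          have hs2 : (∑ e : E, if (p e).2 = u then (1:ℤ) else 0)
              = if (p e₀).2 = u then 1 else 0 := by
            rw [sum_split e₀]
            have hz : (∑ z : {z : E // z ≠ e₀}, if (p z.val).2 = u then (1:ℤ) else 0) = 0 :=
              Finset.sum_eq_zero fun z _ => by simp [(hzero z).2]
            rw [hz, zero_add]
          rw [hs1, hs2]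
          split_ifs <;> simp
        · push_neg at hex
          have hs1 : (∑ e : E, if (p e).1 = u then (1:ℤ) else 0) = 0 :=
            Finset.sum_eq_zero fun e _ => by simp [(hex e).1]
          have hs2 : (∑ e : E, if (p e).2 = u then (1:ℤ) else 0) = 0 :=
            Finset.sum_eq_zero fun e _ => by simp [(hex e).2]
          rw [hs1, hs2]
          simp

lemma exists_split (A B E : Type) [Fintype E] [DecidableEq A] [DecidableEq B]
    (f : E → A) (g : E → B) :
    ∃ χ : E → Bool,
      (∀ a : A, |(∑ e : E, if f e = a ∧ χ e then (1:ℤ) else 0) -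
        (∑ e : E, if f e = a ∧ ¬(χ e) then (1:ℤ) else 0)| ≤ 1) ∧
      (∀ b : B, |(∑ e : E, if g e = b ∧ χ e then (1:ℤ) else 0) -
        (∑ e : E, if g e = b ∧ ¬(χ e) then (1:ℤ) else 0)| ≤ 1) := by
  classical
  obtain ⟨o, hflip, hbal⟩ := balanced_orient (Fintype.card E) E (A ⊕ B)
    (fun e => (Sum.inl (f e), Sum.inr (g e))) le_rfl
  refine ⟨fun e => decide ((o e).1 = Sum.inl (f e)), ?_, ?_⟩
  · intro a
    have h1 : ∀ e : E, (if f e = a ∧ (decide ((o e).1 = Sum.inl (f e)) : Bool) then (1:ℤ) else 0)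
        = if (o e).1 = Sum.inl a then 1 else 0 := by
      intro e
      rcases hflip e with h | h <;> rw [h] <;> simp
    have h2 : ∀ e : E, (if f e = a ∧ ¬((decide ((o e).1 = Sum.inl (f e)) : Bool)) then (1:ℤ) else 0)
        = if (o e).2 = Sum.inl a then 1 else 0 := by
      intro e
      rcases hflip e with h | h <;> rw [h] <;> simp
    rw [Finset.sum_congr rfl fun e _ => h1 e, Finset.sum_congr rfl fun e _ => h2 e]
    exact hbal (Sum.inl a)
  · intro b
    have h1 : ∀ e : E, (if g e = b ∧ (decide ((o e).1 = Sum.inl (f e)) : Bool) then (1:ℤ) else 0)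
        = if (o e).2 = Sum.inr b then 1 else 0 := by
      intro e
      rcases hflip e with h | h <;> rw [h] <;> simp
    have h2 : ∀ e : E, (if g e = b ∧ ¬((decide ((o e).1 = Sum.inl (f e)) : Bool)) then (1:ℤ) else 0)
        = if (o e).1 = Sum.inr b then 1 else 0 := by
      intro e
      rcases hflip e with h | h <;> rw [h] <;> simp
    rw [Finset.sum_congr rfl fun e _ => h1 e, Finset.sum_congr rfl fun e _ => h2 e]
    have := hbal (Sum.inr b)
    rw [abs_sub_comm] at this
    exact this

lemma sq_bal {x y x' y' : ℤ} (hs : x' + y' = x + y) (hb : |x' - y'| ≤ 1) :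
    x'^2 + y'^2 ≤ x^2 + y^2 := by
  have hb' := abs_le.mp hb
  have key : (x' - y')^2 ≤ (x - y)^2 := by
    by_cases h0 : x - y = 0
    · have : x' - y' = 0 := by omega
      rw [this, h0]
    · have h1 : 1 ≤ (x - y)^2 := by
        rcases lt_or_gt_of_ne h0 with h | h <;> nlinarith
      nlinarith
  have e1 : (x' + y')^2 + (x' - y')^2 = 2*(x'^2 + y'^2) := by ring
  have e2 : (x + y)^2 + (x - y)^2 = 2*(x^2 + y^2) := by ring
  have e3 : (x' + y')^2 = (x + y)^2 := by rw [hs]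
  linarith

lemma sq_bal_strict {x y x' y' : ℤ} (hs : x' + y' = x + y) (hb : |x' - y'| ≤ 1)
    (h2 : 2 ≤ |x - y|) : x'^2 + y'^2 < x^2 + y^2 := by
  have hb' := abs_le.mp hb
  have h2' := abs_le.mp (le_refl |x - y|)
  have h4 : 4 ≤ (x - y)^2 := by
    rcases abs_cases (x - y) with ⟨h, _⟩ | ⟨h, _⟩ <;> nlinarith
  have key : (x' - y')^2 ≤ 1 := by nlinarith
  have e1 : (x' + y')^2 + (x' - y')^2 = 2*(x'^2 + y'^2) := by ring
  have e2 : (x + y)^2 + (x - y)^2 = 2*(x^2 + y^2) := by ring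
  have e3 : (x' + y')^2 = (x + y)^2 := by rw [hs]
  linarith

lemma sum_subtype_pred {E : Type} [Fintype E] (P : E → Prop) [DecidablePred P]
    (F : E → ℤ) (hF : ∀ e, ¬ P e → F e = 0) :
    ∑ e : E, F e = ∑ z : {e : E // P e}, F z.val := by
  rw [← Finset.sum_filter_of_ne (fun e _ h => by by_contra hP; exact h (hF e hP))]
  exact Finset.sum_subtype (p := P) _ (fun x => by simp) F

def cnt {E W : Type} [Fintype E] [DecidableEq W] {k : ℕ} (endW : E → W)
    (col : E → Fin k) (w : W) (c : Fin k) : ℤ :=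
  ∑ e : E, if endW e = w ∧ col e = c then 1 else 0

def recol {E : Type} {k : ℕ} (col : E → Fin k) (i j : Fin k)
    (χ : {e : E // col e = i ∨ col e = j} → Bool) : E → Fin k :=
  fun e => if h : col e = i ∨ col e = j then (if χ ⟨e, h⟩ then i else j) else col e

lemma recolor_per_vertex {E : Type} [Fintype E] {k : ℕ} (col : E → Fin k) (i j : Fin k)
    (hij : i ≠ j) (χ : {e : E // col e = i ∨ col e = j} → Bool)
    {W : Type} [DecidableEq W] (endW : E → W) (w : W)
    (hχ : |(∑ z : {e : E // col e = i ∨ col e = j}, if endW z.val = w ∧ χ z then (1:ℤ) else 0) -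
          (∑ z : {e : E // col e = i ∨ col e = j}, if endW z.val = w ∧ ¬(χ z) then (1:ℤ) else 0)| ≤ 1) :
    (∑ c : Fin k, (cnt endW (recol col i j χ) w c)^2 ≤ ∑ c : Fin k, (cnt endW col w c)^2)
    ∧ (2 ≤ |cnt endW col w i - cnt endW col w j| →
        ∑ c : Fin k, (cnt endW (recol col i j χ) w c)^2 < ∑ c : Fin k, (cnt endW col w c)^2) := by
  have hco : ∀ e : E, ¬(col e = i ∨ col e = j) → recol col i j χ e = col e := fun e h => dif_neg h
  have hci : ∀ z : {e : E // col e = i ∨ col e = j},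
      recol col i j χ z.val = if χ z then i else j := by
    intro z
    show (if h : col z.val = i ∨ col z.val = j then (if χ ⟨z.val, h⟩ then i else j)
        else col z.val) = _
    rw [dif_pos z.prop]
  have h1 : ∀ c : Fin k, c ≠ i → c ≠ j →
      cnt endW (recol col i j χ) w c = cnt endW col w c := by
    intro c hc1 hc2
    refine Finset.sum_congr rfl fun e _ => ?_
    by_cases h : col e = i ∨ col e = j
    · have hc : recol col i j χ e = if χ ⟨e, h⟩ then i else j := hci ⟨e, h⟩
      rw [hc]
      have hx : ¬((if χ ⟨e, h⟩ then i else j) = c) := by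
        split_ifs
        · exact fun hh => hc1 hh.symm
        · exact fun hh => hc2 hh.symm
      have hy : ¬(col e = c) := by
        rcases h with h | h <;> rw [h]
        · exact fun hh => hc1 hh.symm
        · exact fun hh => hc2 hh.symm
      simp [hx, hy]
    · rw [hco e h]
  have h2 : cnt endW (recol col i j χ) w i
      = ∑ z : {e : E // col e = i ∨ col e = j}, if endW z.val = w ∧ χ z then (1:ℤ) else 0 := by
    rw [cnt, sum_subtype_pred (fun e => col e = i ∨ col e = j) _ (fun e h => by
      have : ¬(endW e = w ∧ recol col i j χ e = i) := by
        rw [hco e h]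
        exact fun hc => h (Or.inl hc.2)
      simp [this])]
    refine Finset.sum_congr rfl fun z _ => ?_
    rw [hci z]
    by_cases hz : χ z <;> simp [hz, hij, Ne.symm hij]
  have h3 : cnt endW (recol col i j χ) w j
      = ∑ z : {e : E // col e = i ∨ col e = j}, if endW z.val = w ∧ ¬(χ z) then (1:ℤ) else 0 := by
    rw [cnt, sum_subtype_pred (fun e => col e = i ∨ col e = j) _ (fun e h => by
      have : ¬(endW e = w ∧ recol col i j χ e = j) := by
        rw [hco e h]
        exact fun hc => h (Or.inr hc.2)
      simp [this])]
    refine Finset.sum_congr rfl fun z _ => ?_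
    rw [hci z]
    by_cases hz : χ z <;> simp [hz, hij, Ne.symm hij]
  have h4 : cnt endW col w i + cnt endW col w j
      = (∑ z : {e : E // col e = i ∨ col e = j}, if endW z.val = w ∧ χ z then (1:ℤ) else 0)
        + ∑ z : {e : E // col e = i ∨ col e = j}, if endW z.val = w ∧ ¬(χ z) then (1:ℤ) else 0 := by
    have e1 : cnt endW col w i = ∑ z : {e : E // col e = i ∨ col e = j},
        if endW z.val = w ∧ col z.val = i then (1:ℤ) else 0 := by
      rw [cnt]
      exact sum_subtype_pred (fun e => col e = i ∨ col e = j) _ (fun e h => by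
        have : ¬(endW e = w ∧ col e = i) := fun hc => h (Or.inl hc.2)
        simp [this])
    have e2 : cnt endW col w j = ∑ z : {e : E // col e = i ∨ col e = j},
        if endW z.val = w ∧ col z.val = j then (1:ℤ) else 0 := by
      rw [cnt]
      exact sum_subtype_pred (fun e => col e = i ∨ col e = j) _ (fun e h => by
        have : ¬(endW e = w ∧ col e = j) := fun hc => h (Or.inr hc.2)
        simp [this])
    rw [e1, e2, ← Finset.sum_add_distrib, ← Finset.sum_add_distrib]
    refine Finset.sum_congr rfl fun z _ => ?_
    rcases z.prop with h | h
    · have hnj : ¬(col z.val = j) := fun hc => hij (by rw [← h, hc])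
      by_cases hz : χ z <;> by_cases hw : endW z.val = w <;>
        simp [h, hnj, hz, hw, hij, Ne.symm hij]
    · have hni : ¬(col z.val = i) := fun hc => hij (by rw [← hc, h])
      by_cases hz : χ z <;> by_cases hw : endW z.val = w <;>
        simp [h, hni, hz, hw, hij, Ne.symm hij]
  have hdec : ∀ g : Fin k → ℤ,
      ∑ c : Fin k, g c = g i + g j + ∑ c ∈ (Finset.univ.erase i).erase j, g c := by
    intro g
    rw [← Finset.add_sum_erase _ g (Finset.mem_univ i),
        ← Finset.add_sum_erase _ g (Finset.mem_erase.mpr ⟨Ne.symm hij, Finset.mem_univ j⟩)]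
    ring
  have hrest : ∑ c ∈ (Finset.univ.erase i).erase j, (cnt endW (recol col i j χ) w c)^2
      = ∑ c ∈ (Finset.univ.erase i).erase j, (cnt endW col w c)^2 := by
    refine Finset.sum_congr rfl fun c hc => ?_
    have hc' := Finset.mem_erase.mp hc
    have hc'' := Finset.mem_erase.mp hc'.2
    rw [h1 c hc''.1 hc'.1]
  have hsum : cnt endW (recol col i j χ) w i + cnt endW (recol col i j χ) w j
      = cnt endW col w i + cnt endW col w j := by rw [h2, h3, h4]
  have habs : |cnt endW (recol col i j χ) w i - cnt endW (recol col i j χ) w j| ≤ 1 := by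
    rw [h2, h3]; exact hχ
  constructor
  · rw [hdec (fun c => (cnt endW (recol col i j χ) w c)^2),
      hdec (fun c => (cnt endW col w c)^2), hrest]
    have := sq_bal hsum habs
    linarith
  · intro hbig
    rw [hdec (fun c => (cnt endW (recol col i j χ) w c)^2),
      hdec (fun c => (cnt endW col w c)^2), hrest]
    have := sq_bal_strict hsum habs hbig
    linarith

/-- de Werra: every finite bipartite multigraph has an
equitable edge-colouring with k colours, for every k ≥ 1.  The multigraph is
given by a finite edge type `E` with endpoint maps into the two parts `A`, `B`. -/
theorem equitable_edge_colouring (A B E : Type) [Fintype A] [Fintype B]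
    [Fintype E] [DecidableEq A] [DecidableEq B]
    (endA : E → A) (endB : E → B) (k : ℕ) (hk : 1 ≤ k) :
    ∃ col : E → Fin k,
      (∀ a : A, ∀ i j : Fin k,
        |((Finset.univ.filter fun e => endA e = a ∧ col e = i).card : ℤ) -
          ((Finset.univ.filter fun e => endA e = a ∧ col e = j).card : ℤ)| ≤ 1) ∧
      (∀ b : B, ∀ i j : Fin k,
        |((Finset.univ.filter fun e => endB e = b ∧ col e = i).card : ℤ) -
          ((Finset.univ.filter fun e => endB e = b ∧ col e = j).card : ℤ)| ≤ 1) := by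
  classical
  have hcA : ∀ (col : E → Fin k) (a : A) (i : Fin k),
      ((Finset.univ.filter fun e => endA e = a ∧ col e = i).card : ℤ) = cnt endA col a i := by
    intro col a i
    rw [cnt, Finset.card_filter]
    push_cast
    rfl
  have hcB : ∀ (col : E → Fin k) (b : B) (i : Fin k),
      ((Finset.univ.filter fun e => endB e = b ∧ col e = i).card : ℤ) = cnt endB col b i := by
    intro col b i
    rw [cnt, Finset.card_filter]
    push_cast
    rfl
  haveI : Nonempty (Fin k) := ⟨⟨0, hk⟩⟩
  haveI : Nonempty (E → Fin k) := ⟨fun _ => Classical.arbitrary _⟩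
  obtain ⟨col, -, hmin⟩ := Finset.exists_min_image (Finset.univ : Finset (E → Fin k))
    (fun col => (∑ a : A, ∑ c : Fin k, (cnt endA col a c)^2)
      + ∑ b : B, ∑ c : Fin k, (cnt endB col b c)^2) Finset.univ_nonempty
  have main : ∀ i j : Fin k, i ≠ j →
      (∀ a : A, |cnt endA col a i - cnt endA col a j| ≤ 1) ∧
      (∀ b : B, |cnt endB col b i - cnt endB col b j| ≤ 1) := by
    intro i j hij
    obtain ⟨χ, hbA, hbB⟩ := exists_split A B {e : E // col e = i ∨ col e = j}
      (fun z => endA z.val) (fun z => endB z.val)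
    have hA := fun a => recolor_per_vertex col i j hij χ endA a (hbA a)
    have hB := fun b => recolor_per_vertex col i j hij χ endB b (hbB b)
    have hle := hmin (recol col i j χ) (Finset.mem_univ _)
    have hleB : (∑ b : B, ∑ c : Fin k, (cnt endB (recol col i j χ) b c)^2)
        ≤ ∑ b : B, ∑ c : Fin k, (cnt endB col b c)^2 :=
      Finset.sum_le_sum (fun b _ => (hB b).1)
    have hleA : (∑ a : A, ∑ c : Fin k, (cnt endA (recol col i j χ) a c)^2)
        ≤ ∑ a : A, ∑ c : Fin k, (cnt endA col a c)^2 :=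
      Finset.sum_le_sum (fun a _ => (hA a).1)
    constructor
    · intro a
      by_contra hc
      have h2 := Int.add_one_le_iff.mpr (not_le.mp hc)
      norm_num at h2
      have hstrict := (hA a).2 h2
      have hltA : (∑ a' : A, ∑ c : Fin k, (cnt endA (recol col i j χ) a' c)^2)
          < ∑ a' : A, ∑ c : Fin k, (cnt endA col a' c)^2 :=
        Finset.sum_lt_sum (fun a' _ => (hA a').1) ⟨a, Finset.mem_univ a, hstrict⟩
      linarith
    · intro b
      by_contra hc
      have h2 := Int.add_one_le_iff.mpr (not_le.mp hc)
      norm_num at h2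
      have hstrict := (hB b).2 h2
      have hltB : (∑ b' : B, ∑ c : Fin k, (cnt endB (recol col i j χ) b' c)^2)
          < ∑ b' : B, ∑ c : Fin k, (cnt endB col b' c)^2 :=
        Finset.sum_lt_sum (fun b' _ => (hB b').1) ⟨b, Finset.mem_univ b, hstrict⟩
      linarith
  refine ⟨col, ?_, ?_⟩
  · intro a i j
    rw [hcA, hcA]
    by_cases hij : i = j
    · subst hij; simp
    · exact (main i j hij).1 a
  · intro b i j
    rw [hcB, hcB]
    by_cases hij : i = j
    · subst hij; simp
    · exact (main i j hij).2 b
end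

section
/- Let r ≤ n and let C be an r × r × n partial latin box on symbol set [n]. Let V ⊆ [n] with |V| = n − r, and let U ⊆ [r] × [r] be such that for every i ∈ [r], exactly n − r pairs of U have first coordinate i and exactly n − r pairs of U have second coordinate i. Suppose: for all (i,j) ∈ U, the cells (i,j,k) with k ≤ r are filled with symbols from [n] \ V and the cells (i,j,k) with k > r are empty; all cells (i,j,k) with (i,j) ∉ U are filled; no cell (i,j,k) with k > r contains a symbol from V; and each symbol occurs at most once in every line of the filled cells. Then the empty cells can be filled with symbols from V so that the resulting r × r × n array has each symbol at most once in every line. -/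
/-- A partial latin box: each symbol occurs at most once in every line
among the filled cells. -/
def IsPartialLatinBox {r s t n : ℕ}
    (C : Fin r → Fin s → Fin t → Option (Fin n)) : Prop :=
  (∀ i j k₁ k₂ x, C i j k₁ = some x → C i j k₂ = some x → k₁ = k₂) ∧
  (∀ i j₁ j₂ k x, C i j₁ k = some x → C i j₂ k = some x → j₁ = j₂) ∧
  (∀ i₁ i₂ j k x, C i₁ j k = some x → C i₂ j k = some x → i₁ = i₂)

/-- A latin box: each symbol occurs at most once in every line. -/
def IsLatinBox {r s t n : ℕ} (D : Fin r → Fin s → Fin t → Fin n) : Prop :=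
  (∀ i j, Function.Injective fun k => D i j k) ∧
  (∀ i k, Function.Injective fun j => D i j k) ∧
  (∀ j k, Function.Injective fun i => D i j k)

/-!
The pairs of `U` form an `(n - r)`-regular bipartite graph on two copies of `[r]`. By Hall's
theorem it contains a perfect matching; removing it leaves an `(n - r - 1)`-regular graph, so
induction gives a proper edge colouring `c` with `n - r` colours. Enumerate `V` as
`v₀, …, v_{n-r-1}` and put `v_{(c(i,j) + k) mod (n - r)}` into the empty cell `(i, j, k)`. Along
a `k`-line the empty cells sit in the `n - r` consecutive layers `r, …, n - 1`, which are distinct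
mod `n - r`; along an `i`- or `j`-line the colours differ. Every filled cell on a line through an
empty cell holds a symbol outside `V`, so old and new symbols never clash.
-/

open Finset Function

def cyclicShift {d : ℕ} (m : Fin d) (k : ℕ) : Fin d := ⟨(m + k) % d, Nat.mod_lt _ m.pos⟩

theorem cyclicShift_left_injective {d : ℕ} (k : ℕ) :
    Injective fun m : Fin d => cyclicShift m k := by
  intro a b h
  have hab : (a : ℕ) ≡ b [MOD d] := Nat.ModEq.add_right_cancel' k (Fin.val_eq_of_eq h)
  exact Fin.ext (hab.eq_of_lt_of_lt a.isLt b.isLt)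

theorem cyclicShift_injOn_Ico {d : ℕ} (m : Fin d) (a : ℕ) :
    Set.InjOn (cyclicShift m) (Set.Ico a (a + d)) := by
  intro k hk k' hk' h
  have hkk' : k - a + a ≡ k' - a + a [MOD d] := by
    rw [Nat.sub_add_cancel hk.1, Nat.sub_add_cancel hk'.1]
    exact Nat.ModEq.add_left_cancel' m (Fin.val_eq_of_eq h)
  have := (Nat.ModEq.add_right_cancel' a hkk').eq_of_lt_of_lt (by grind) (by grind)
  grind

theorem injective_getD {ι β : Type*} {c : ι → Option β} {f : ι → β} (s : Set β)
    (hc : ∀ x y b, c x = some b → c y = some b → x = y)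
    (hf : ∀ x y, c x = none → c y = none → f x = f y → x = y)
    (hfs : ∀ x, c x = none → f x ∈ s)
    (hcs : ∀ x y b, c x = none → c y = some b → b ∉ s) :
    Injective fun x => (c x).getD (f x) := by
  intro x y h
  rcases hx : c x with _ | a <;> rcases hy : c y with _ | b <;>
    simp only [hx, hy, Option.getD_none, Option.getD_some] at h
  · exact hf x y hx hy h
  · exact absurd (h ▸ hfs x hx) (hcs x y b hx hy)
  · exact absurd (h ▸ hfs y hy) (hcs y x a hy hx)
  · exact hc x y b (h ▸ hx) hy

def IsProperEdgeColoring {α β γ : Type*} (U : Finset (α × β)) (c : U → γ) : Prop :=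
  ∀ p q : U, c p = c q → p.1.1 = q.1.1 ∨ p.1.2 = q.1.2 → p = q

variable {α : Type*} [DecidableEq α]

def IsBipartiteRegular (U : Finset (α × α)) (d : ℕ) : Prop :=
  (∀ i, #{p ∈ U | p.1 = i} = d) ∧ ∀ j, #{p ∈ U | p.2 = j} = d

namespace IsBipartiteRegular

variable {U : Finset (α × α)} {d : ℕ}

theorem exists_perm [Fintype α] (hU : IsBipartiteRegular U d) (hd : 0 < d) :
    ∃ e : Equiv.Perm α, ∀ i, (i, e i) ∈ U := by
  suffices hHall : ∀ A : Finset α, #A ≤ #{j | ∃ i ∈ A, (i, j) ∈ U} by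
    obtain ⟨f, hf, hfU⟩ :=
      (Fintype.all_card_le_filter_rel_iff_exists_injective fun i j => (i, j) ∈ U).mp hHall
    exact ⟨Equiv.ofBijective f hf.bijective_of_finite, hfU⟩
  intro A
  set N : Finset α := {j | ∃ i ∈ A, (i, j) ∈ U}
  refine Nat.le_of_mul_le_mul_right ?_ hd
  calc #A * d = ∑ i ∈ A, #{p ∈ U | p.1 = i} := by simp [hU.1]
    _ = #{p ∈ U | p.1 ∈ A} := sum_card_fiberwise_eq_card_filter _ _ _
    _ ≤ #{p ∈ U | p.2 ∈ N} := by
      refine card_le_card fun p hp => ?_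
      simp only [mem_filter, N, mem_univ, true_and] at hp ⊢
      exact ⟨hp.1, p.1, hp.2, hp.1⟩
    _ = ∑ j ∈ N, #{p ∈ U | p.2 = j} := (sum_card_fiberwise_eq_card_filter _ _ _).symm
    _ = #N * d := by simp [hU.2]

theorem filter_ne_perm (hU : IsBipartiteRegular U (d + 1)) (e : Equiv.Perm α)
    (he : ∀ i, (i, e i) ∈ U) : IsBipartiteRegular {p ∈ U | p.2 ≠ e p.1} d := by
  constructor
  · intro i
    have hrow : {p ∈ {p ∈ U | p.2 ≠ e p.1} | p.1 = i} =
        {p ∈ U | p.1 = i}.erase (i, e i) := by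
      ext ⟨a, b⟩
      simp only [mem_filter, mem_erase, ne_eq, Prod.mk.injEq]
      grind
    rw [hrow, card_erase_of_mem (by simp [he]), hU.1, Nat.add_sub_cancel]
  · intro j
    have hcol : {p ∈ {p ∈ U | p.2 ≠ e p.1} | p.2 = j} =
        {p ∈ U | p.2 = j}.erase (e.symm j, j) := by
      ext ⟨a, b⟩
      simp only [mem_filter, mem_erase, ne_eq, Prod.mk.injEq, Equiv.eq_symm_apply]
      grind
    rw [hcol, card_erase_of_mem (by simpa using he (e.symm j)), hU.2, Nat.add_sub_cancel]

theorem exists_edgeColoring [Fintype α] (hU : IsBipartiteRegular U d) :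
    ∃ c : U → Fin d, IsProperEdgeColoring U c := by
  induction d generalizing U with
  | zero =>
    have : IsEmpty U :=
      ⟨fun p => notMem_empty p.1 (card_eq_zero.1 (hU.1 p.1.1) ▸ mem_filter.2 ⟨p.2, rfl⟩)⟩
    exact ⟨isEmptyElim, isEmptyElim⟩
  | succ d ih =>
    obtain ⟨e, he⟩ := hU.exists_perm d.succ_pos
    obtain ⟨c, hc⟩ := ih (hU.filter_ne_perm e he)
    refine ⟨fun p => if h : p.1.2 = e p.1.1 then Fin.last d
      else (c ⟨p.1, mem_filter.2 ⟨p.2, h⟩⟩).castSucc, fun p q hpq hpq' => ?_⟩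
    by_cases hp : p.1.2 = e p.1.1 <;> by_cases hq : q.1.2 = e q.1.1 <;>
      simp only [hp, hq, dite_true, dite_false] at hpq
    · refine Subtype.ext (Prod.ext ?_ ?_) <;> grind [e.injective.eq_iff]
    · exact absurd hpq.symm (Fin.castSucc_ne_last _)
    · exact absurd hpq (Fin.castSucc_ne_last _)
    · simpa using hc _ _ (Fin.castSucc_inj.1 hpq) hpq'

end IsBipartiteRegular

theorem IsPartialLatinBox.isLatinBox_getD_cyclicShift {r s t n d : ℕ}
    {C : Fin r → Fin s → Fin t → Option (Fin n)} (hC : IsPartialLatinBox C)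
    {U : Finset (Fin r × Fin s)} {c : U → Fin d} (hc : IsProperEdgeColoring U c)
    (V : Finset (Fin n)) (v : Fin d ↪ Fin n) (hv : ∀ m, v m ∈ V) (a : ℕ) (hta : t ≤ a + d)
    (hnone : ∀ i j k, C i j k = none ↔ (i, j) ∈ U ∧ a ≤ (k : ℕ))
    (hU_notMem : ∀ i j k x, (i, j) ∈ U → C i j k = some x → x ∉ V)
    (hback : ∀ i j (k : Fin t), a ≤ (k : ℕ) → ∀ x ∈ V, C i j k ≠ some x)
    (F : Fin r → Fin s → Fin t → Fin n)
    (hF : ∀ i j (k : Fin t) (h : (i, j) ∈ U), a ≤ (k : ℕ) →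
      F i j k = v (cyclicShift (c ⟨(i, j), h⟩) k)) :
    IsLatinBox fun i j k => (C i j k).getD (F i j k) := by
  have hF_none {i j} {k : Fin t} (h : C i j k = none) :
      F i j k = v (cyclicShift (c ⟨(i, j), ((hnone i j k).1 h).1⟩) k) :=
    hF i j k _ ((hnone i j k).1 h).2
  have hF_mem i j k (h : C i j k = none) : F i j k ∈ V := hF_none h ▸ hv _
  refine ⟨fun i j => injective_getD V (hC.1 i j) (fun k k' hk hk' h => ?_) (hF_mem i j)
      (fun k _ x hk => hU_notMem i j _ x ((hnone i j k).1 hk).1),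
    fun i k => injective_getD V (fun j j' => hC.2.1 i j j' k) (fun j j' hj hj' h => ?_)
      (hF_mem i · k) (fun j j' x hj hx hxV => hback i j' k ((hnone i j k).1 hj).2 x hxV hx),
    fun j k => injective_getD V (fun i i' => hC.2.2 i i' j k) (fun i i' hi hi' h => ?_)
      (hF_mem · j k) (fun i i' x hi hx hxV => hback i' j k ((hnone i j k).1 hi).2 x hxV hx)⟩
  · rw [hF_none hk, hF_none hk'] at h
    have hk_mem : ∀ k : Fin t, C i j k = none → (k : ℕ) ∈ Set.Ico a (a + d) :=
      fun k hk => ⟨((hnone i j k).1 hk).2, by omega⟩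
    exact Fin.ext (cyclicShift_injOn_Ico _ a (hk_mem k hk) (hk_mem k' hk') (v.injective h))
  · rw [hF_none hj, hF_none hj'] at h
    simpa using hc _ _ (cyclicShift_left_injective k (v.injective h)) (.inl rfl)
  · rw [hF_none hi, hF_none hi'] at h
    simpa using hc _ _ (cyclicShift_left_injective k (v.injective h)) (.inr rfl)

theorem fill_back_entries_general (n r : ℕ)
    (C : Fin r → Fin r → Fin n → Option (Fin n))
    (hC : IsPartialLatinBox C)
    (U : Finset (Fin r × Fin r)) (V : Finset (Fin n)) (hV : V.card = n - r)
    (hU1 : ∀ i : Fin r, (U.filter fun p => p.1 = i).card = n - r)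
    (hU2 : ∀ i : Fin r, (U.filter fun p => p.2 = i).card = n - r)
    (hUfill : ∀ p ∈ U, ∀ k : Fin n, (k : ℕ) < r →
      ∃ x : Fin n, x ∉ V ∧ C p.1 p.2 k = some x)
    (hUempty : ∀ p ∈ U, ∀ k : Fin n, r ≤ (k : ℕ) → C p.1 p.2 k = none)
    (hfill : ∀ p : Fin r × Fin r, p ∉ U → ∀ k : Fin n, (C p.1 p.2 k).isSome)
    (hnoV : ∀ (i j : Fin r) (k : Fin n), r ≤ (k : ℕ) → ∀ x ∈ V, C i j k ≠ some x) :
    ∃ D : Fin r → Fin r → Fin n → Fin n, IsLatinBox D ∧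
      (∀ i j k x, C i j k = some x → D i j k = x) ∧
      (∀ i j k, C i j k = none → D i j k ∈ V) := by
  obtain ⟨c, hc⟩ := IsBipartiteRegular.exists_edgeColoring ⟨hU1, hU2⟩
  have hnone i j k : C i j k = none ↔ (i, j) ∈ U ∧ r ≤ (k : ℕ) := by
    refine ⟨fun h => ?_, fun h => hUempty _ h.1 k h.2⟩
    by_cases hij : (i, j) ∈ U
    · refine ⟨hij, not_lt.1 fun hk => ?_⟩
      obtain ⟨x, -, hx⟩ := hUfill _ hij k hk
      simp [h] at hx
    · simpa [h] using hfill _ hij k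
  have hU_notMem i j k x (hij : (i, j) ∈ U) (hx : C i j k = some x) : x ∉ V := by
    by_cases hk : r ≤ (k : ℕ)
    · exact fun hxV => hnoV i j k hk x hxV hx
    · obtain ⟨y, hyV, hy⟩ := hUfill _ hij k (not_le.1 hk)
      simp_all
  let v := V.orderEmbOfFin hV
  let F i j (k : Fin n) := if h : (i, j) ∈ U then v (cyclicShift (c ⟨(i, j), h⟩) k) else k
  refine ⟨fun i j k => (C i j k).getD (F i j k),
    hC.isLatinBox_getD_cyclicShift hc V v.toEmbedding (V.orderEmbOfFin_mem hV) r (by omega)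
      hnone hU_notMem hnoV F fun _ _ _ h _ => dif_pos h,
    fun i j k x h => by simp [h], fun i j k h => ?_⟩
  obtain ⟨hij, -⟩ := (hnone i j k).1 h
  simp [h, F, hij, v, V.orderEmbOfFin_mem]

/-- completing the back entries of an r × r × n partial latin box. -/
theorem fill_back_entries (n r : ℕ) (hr : r ≤ n)
    (C : Fin r → Fin r → Fin n → Option (Fin n))
    (hC : IsPartialLatinBox C)
    (U : Finset (Fin r × Fin r)) (V : Finset (Fin n)) (hV : V.card = n - r)
    (hU1 : ∀ i : Fin r, (U.filter fun p => p.1 = i).card = n - r)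
    (hU2 : ∀ i : Fin r, (U.filter fun p => p.2 = i).card = n - r)
    (hUfill : ∀ p ∈ U, ∀ k : Fin n, (k : ℕ) < r →
      ∃ x : Fin n, x ∉ V ∧ C p.1 p.2 k = some x)
    (hUempty : ∀ p ∈ U, ∀ k : Fin n, r ≤ (k : ℕ) → C p.1 p.2 k = none)
    (hfill : ∀ p : Fin r × Fin r, p ∉ U → ∀ k : Fin n, (C p.1 p.2 k).isSome)
    (hnoV : ∀ (i j : Fin r) (k : Fin n), r ≤ (k : ℕ) → ∀ x ∈ V, C i j k ≠ some x) :
    ∃ D : Fin r → Fin r → Fin n → Fin n, IsLatinBox D ∧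
      (∀ i j k x, C i j k = some x → D i j k = x) ∧
      (∀ i j k, C i j k = none → D i j k ∈ V) :=
  fill_back_entries_general n r C hC U V hV hU1 hU2 hUfill hUempty hfill hnoV
end

section
/- Let a ≡ 1 or 5 (mod 6), let A(i,j,k) ≡ −i + j + k (mod a) and B(i,j,k) ≡ −i − j + 2k + 1 (mod a), let b ∈ [a], and let S = [a−b] with S_k = {s + k − 1 (mod a) : s ∈ S}. For i, j ∈ [a], say the pair (i,j) is 'marked' if −i + j + 1 ≡ s (mod a) for some s ∈ [a−b]. Then for every m ∈ [b] and i, j ∈ [a]: there exists k ∈ [a] with B(i,j,k) = m and A(i,j,k) ∈ S_k if and only if (i,j) is marked. Consequently, in the extension A_S of A by B with S, the cell (i, j, a+1) is filled if and only if the cell (i, j, a+m) is filled for every m ∈ [b]. -/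
/-- in the extension A_S of A by B with S = [a−b], the cell
(i,j,a+m) is filled iff the pair (i,j) is marked (−i+j+1 ≡ s mod a for some
s ∈ [a−b]); consequently cell (i,j,a+1) is filled iff all cells (i,j,a+m),
m ∈ [b], are filled. -/
theorem extension_fill_condition (a b : ℕ) (ha : a % 6 = 1 ∨ a % 6 = 5)
    (hb : 1 ≤ b) (hba : b ≤ a)
    (A B : ZMod a → ZMod a → ZMod a → ZMod a)
    (hA : ∀ i j k, A i j k = -i + j + k)
    (hB : ∀ i j k, B i j k = -i - j + 2 * k + 1)
    (filled : ZMod a → ZMod a → ℕ → Prop)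
    (hfilled : ∀ i j m, filled i j m ↔
      ∃ k : ZMod a, B i j k = (m : ZMod a) ∧
        ∃ s : ℕ, 1 ≤ s ∧ s ≤ a - b ∧ A i j k = k - 1 + (s : ZMod a))
    (marked : ZMod a → ZMod a → Prop)
    (hmarked : ∀ i j, marked i j ↔
      ∃ s : ℕ, 1 ≤ s ∧ s ≤ a - b ∧ -i + j + 1 = (s : ZMod a)) :
    (∀ m : ℕ, 1 ≤ m → m ≤ b → ∀ i j, filled i j m ↔ marked i j) ∧
    (∀ i j, filled i j 1 ↔ ∀ m : ℕ, 1 ≤ m → m ≤ b → filled i j m) := by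
  -- 2 is a unit in ZMod a since a is odd
  have haodd : a % 2 = 1 := by omega
  have h2 : IsUnit (2 : ZMod a) := by
    have : ((2 : ℕ) : ZMod a) = (2 : ZMod a) := by push_cast; ring
    rw [← this, ZMod.isUnit_iff_coprime]
    exact Nat.coprime_two_left.mpr (Nat.odd_iff.mpr haodd)
  have key : ∀ m : ℕ, 1 ≤ m → m ≤ b → ∀ i j, filled i j m ↔ marked i j := by
    intro m hm1 hmb i j
    rw [hfilled, hmarked]
    constructor
    · rintro ⟨k, -, s, hs1, hs2, hAk⟩
      refine ⟨s, hs1, hs2, ?_⟩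
      rw [hA] at hAk
      linear_combination hAk
    · rintro ⟨s, hs1, hs2, hsm⟩
      refine ⟨(2 : ZMod a)⁻¹ * ((m : ZMod a) + i + j - 1), ?_, s, hs1, hs2, ?_⟩
      · rw [hB]
        have := ZMod.mul_inv_of_unit _ h2
        linear_combination ((m : ZMod a) + i + j - 1) * this
      · rw [hA]
        linear_combination hsm
  refine ⟨key, fun i j => ?_⟩
  constructor
  · intro h1 m hm1 hmb
    rw [key m hm1 hmb]
    rw [← key 1 le_rfl hb]
    exact h1
  · intro h
    exact h 1 le_rfl hb
end

section
/- Let C be an n × n × r partial latin box (r ≤ n) in which exactly the cells (i, j, k) with i, j ∈ (n−s) + [s] and k ∈ [r] are empty, for some s ≤ n. Suppose that for each fixed k ∈ [r], the set of symbols occurring in line (i, ·, k) equals a common set V_k for every i ∈ (n−s)+[s], and likewise the set of symbols in line (·, j, k) equals V_k for every j ∈ (n−s)+[s]; and suppose each symbol of [n] occurs at least r − s times in the layer (n−s+1, ·, ·). Then C can be completed to an n × n × r latin box. -/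
/-!
In layer `k`, every line through the empty `s × s` corner misses the same `s` symbols
`W k = [n] \ V k`. Hence it suffices to find an `r × s` array `g` whose row `k` lists `W k` and
whose columns have distinct entries: putting `g k ((i + j) mod s)` in corner cell `(i, j, k)` is
then latin. Such an array is a proper `s`-edge-colouring of the bipartite graph `k ~ x ⟺ x ∈ W k`,
whose left degrees are `s` and, by the symbol count in the first corner row, whose right degrees are
at most `s`. Padding it with `n - r` rows to an `s`-regular bipartite multigraph and splitting off `s`
perfect matchings with Hall's theorem gives the colouring.
-/

open Finset Function

section Counting

variable {α κ β : Type*} [Fintype α]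

theorem card_filter_exists_eq_some [Fintype β] (c : α → Option β)
    [DecidablePred fun b => ∃ a, c a = some b]
    (hc : ∀ a₁ a₂ b, c a₁ = some b → c a₂ = some b → a₁ = a₂) :
    #{b | ∃ a, c a = some b} = #{a | c a ≠ none} := by
  refine (card_bij (fun a ha => (c a).get (Option.isSome_iff_ne_none.mpr (mem_filter.mp ha).2))
    (fun a _ => by simp) (fun a₁ _ a₂ _ h => hc a₁ a₂ _ (Option.some_get _).symm
      (by rw [h, Option.some_get])) ?_).symm
  intro b hb
  obtain ⟨a, ha⟩ := (mem_filter.mp hb).2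
  exact ⟨a, by simp [ha], by simp [ha]⟩

theorem card_filter_eq_some_le [Fintype κ] [DecidableEq β] (c : α → κ → Option β)
    (hc : ∀ a₁ a₂ k b, c a₁ k = some b → c a₂ k = some b → a₁ = a₂) (b : β)
    [DecidablePred fun k => ∃ a, c a k = some b] :
    #{p : α × κ | c p.1 p.2 = some b} ≤ #{k | ∃ a, c a k = some b} := by
  refine card_le_card_of_injOn Prod.snd (fun p hp => ?_) fun p hp q hq h => ?_
  · simp only [coe_filter, mem_univ, true_and] at hp ⊢
    exact ⟨p.1, hp⟩
  · simp only [coe_filter, mem_univ, true_and] at hp hq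
    exact Prod.ext (hc _ _ _ _ hp (h ▸ hq)) h

end Counting

section Multigraph

variable {α ι β : Type*} [Fintype α] [Fintype ι] [Fintype β]

theorem exists_le_sum_eq (c : α → ℕ) {m : ℕ} (hm : m ≤ ∑ x, c x) :
    ∃ c₁ ≤ c, ∑ x, c₁ x = m := by
  classical
  induction m with
  | zero => exact ⟨0, fun _ => Nat.zero_le _, by simp⟩
  | succ m ih =>
    obtain ⟨c₁, hc₁, hsum⟩ := ih (by omega)
    have hlt : c₁ < c := lt_of_le_of_ne hc₁ (by rintro rfl; omega)
    obtain ⟨x, hx⟩ := (Pi.lt_def.mp hlt).2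
    refine ⟨c₁ + Pi.single x 1, fun y => ?_, ?_⟩
    · rcases eq_or_ne y x with rfl | hy
      · simpa using hx
      · simpa [hy] using hc₁ y
    · simp [sum_add_distrib, hsum]

theorem exists_rows_sum_eq {s : ℕ} (q : ℕ) (c : α → ℕ) (hc : ∑ x, c x = q * s) :
    ∃ E : Fin q → α → ℕ, (∀ p, ∑ x, E p x = s) ∧ ∀ x, ∑ p, E p x = c x := by
  induction q generalizing c with
  | zero =>
    refine ⟨finZeroElim, finZeroElim, fun x => ?_⟩
    simpa using (sum_eq_zero_iff.mp (by simpa using hc) x (mem_univ x)).symm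
  | succ q ih =>
    obtain ⟨c₁, hc₁, hsum⟩ := exists_le_sum_eq c (m := s) (by rw [hc]; nlinarith)
    obtain ⟨E, hrow, hcol⟩ := ih (c - c₁) (by
      simp only [Pi.sub_apply]
      rw [sum_tsub_distrib _ fun x _ => hc₁ x, hc, hsum, add_mul, one_mul, Nat.add_sub_cancel])
    refine ⟨Fin.cons c₁ E, Fin.cases hsum hrow, fun x => ?_⟩
    rw [Fin.sum_univ_succ]
    simp only [Fin.cons_zero, Fin.cons_succ, hcol, Pi.sub_apply]
    exact Nat.add_sub_cancel' (hc₁ x)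

theorem exists_injective_pos_of_colSum_le_rowSum (M : ι → β → ℕ) {d : ℕ} (hd : 0 < d)
    (hrow : ∀ i, d ≤ ∑ x, M i x) (hcol : ∀ x, ∑ i, M i x ≤ d) :
    ∃ f : ι → β, Injective f ∧ ∀ i, 0 < M i (f i) := by
  classical
  obtain ⟨f, hinj, hf⟩ := (all_card_le_biUnion_card_iff_exists_injective
      fun i => ({x | 0 < M i x} : Finset β)).mp fun S => by
    set T := S.biUnion fun i => ({x | 0 < M i x} : Finset β)
    refine Nat.le_of_mul_le_mul_left ?_ hd
    calc d * #S = ∑ i ∈ S, d := by rw [sum_const, smul_eq_mul, mul_comm]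
      _ ≤ ∑ i ∈ S, ∑ x, M i x := sum_le_sum fun i _ => hrow i
      _ = ∑ i ∈ S, ∑ x ∈ T, M i x := sum_congr rfl fun i hi => by
          refine (sum_subset (subset_univ T) fun x _ hx => ?_).symm
          by_contra h
          exact hx (mem_biUnion.mpr ⟨i, hi, by simpa [Nat.pos_iff_ne_zero] using h⟩)
      _ = ∑ x ∈ T, ∑ i ∈ S, M i x := sum_comm
      _ ≤ ∑ x ∈ T, ∑ i, M i x :=
          sum_le_sum fun x _ => sum_le_sum_of_subset (subset_univ S)
      _ ≤ ∑ x ∈ T, d := sum_le_sum fun x _ => hcol x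
      _ = d * #T := by rw [sum_const, smul_eq_mul, mul_comm]
  exact ⟨f, hinj, fun i => (mem_filter.mp (hf i)).2⟩

theorem exists_bijective_decomposition_of_regular [DecidableEq β]
    (hcard : Fintype.card ι = Fintype.card β) (d : ℕ) (M : ι → β → ℕ)
    (hrow : ∀ i, ∑ x, M i x = d) (hcol : ∀ x, ∑ i, M i x = d) :
    ∃ F : Fin d → ι → β, (∀ t, Bijective (F t)) ∧
      ∀ i x, #{t | F t i = x} = M i x := by
  induction d generalizing M with
  | zero =>
    refine ⟨finZeroElim, finZeroElim, fun i x => ?_⟩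
    simpa using (sum_eq_zero_iff.mp (hrow i) x (mem_univ x)).symm
  | succ d ih =>
    obtain ⟨f, hinj, hf⟩ :=
      exists_injective_pos_of_colSum_le_rowSum M d.succ_pos (fun i => (hrow i).ge)
        fun x => (hcol x).le
    have hbij : Bijective f :=
      (Fintype.bijective_iff_injective_and_card f).mpr ⟨hinj, hcard⟩
    have hle : ∀ i x, (if f i = x then 1 else 0) ≤ M i x := by
      intro i x
      split_ifs with h
      · exact h ▸ hf i
      · exact Nat.zero_le _
    obtain ⟨F, hFbij, hF⟩ := ih (fun i x => M i x - if f i = x then 1 else 0)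
      (fun i => by simp [sum_tsub_distrib _ fun x _ => hle i x, hrow i])
      (fun x => by
        rw [sum_tsub_distrib _ fun i _ => hle i x, hcol x,
          hbij.sum_comp fun y => if y = x then 1 else 0]
        simp)
    refine ⟨Fin.cons f F, Fin.cases hbij hFbij, fun i x => ?_⟩
    rw [card_filter, Fin.sum_univ_succ]
    simp only [Fin.cons_zero, Fin.cons_succ]
    rw [← card_filter, hF i x]
    exact Nat.add_sub_cancel' (hle i x)

theorem exists_latinRectangle_of_card_filter_mem_le [DecidableEq β]
    (hcard : Fintype.card ι ≤ Fintype.card β) {s : ℕ} (W : ι → Finset β)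
    (hW : ∀ k, #(W k) = s) (hdeg : ∀ x, #{k | x ∈ W k} ≤ s) :
    ∃ g : ι → Fin s → β, (∀ k t, g k t ∈ W k) ∧ (∀ k, Injective (g k)) ∧
      ∀ t, Injective fun k => g k t := by
  have hdeg_sum : ∑ x, #{k | x ∈ W k} = Fintype.card ι * s := by
    have := sum_card_bipartiteAbove_eq_sum_card_bipartiteBelow (s := univ) (t := univ)
      (r := fun k x => x ∈ W k)
    simp only [bipartiteAbove, bipartiteBelow, filter_univ_mem, hW] at this
    simp [← this]
  -- `s`-regular padding: the extra rows `E` absorb the deficiencies `s - #{k | x ∈ W k}`.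
  obtain ⟨E, hErow, hEcol⟩ := exists_rows_sum_eq (s := s) (Fintype.card β - Fintype.card ι)
    (fun x => s - #{k | x ∈ W k}) (by
      rw [sum_tsub_distrib _ fun x _ => hdeg x, hdeg_sum, Nat.sub_mul]
      simp)
  set M : ι ⊕ Fin (Fintype.card β - Fintype.card ι) → β → ℕ :=
    Sum.elim (fun k x => if x ∈ W k then 1 else 0) E
  obtain ⟨F, hFbij, hF⟩ := exists_bijective_decomposition_of_regular
    (by simp only [Fintype.card_sum, Fintype.card_fin]; omega) s M
    (Sum.rec (fun k => by simp [M, hW]) fun p => hErow p)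
    (fun x => by
      simp only [M, Fintype.sum_sum_type, Sum.elim_inl, Sum.elim_inr, sum_boole, hEcol]
      exact Nat.add_sub_cancel' (hdeg x))
  refine ⟨fun k t => F t (Sum.inl k), fun k t => ?_, fun k t₁ t₂ h => ?_,
    fun t _ _ h => Sum.inl_injective ((hFbij t).1 h)⟩
  · by_contra hnot
    have := hF (Sum.inl k) (F t (Sum.inl k))
    simp only [M, Sum.elim_inl, if_neg hnot, card_eq_zero, filter_eq_empty_iff] at this
    exact this (mem_univ t) rfl
  · have hle : #{t' | F t' (Sum.inl k) = F t₂ (Sum.inl k)} ≤ 1 := by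
      rw [hF]
      simp only [M, Sum.elim_inl]
      split_ifs <;> omega
    exact card_le_one.mp hle t₁ (by simpa using h) t₂ (by simp)

end Multigraph

section CornerFill

variable {n r s : ℕ} {C : Fin n → Fin n → Fin r → Option (Fin n)}
  {g : Fin r → Fin s → Fin n}

-- The default `i` of `getD` is never read: off the corner the cells of `C` are filled.
variable (C g) in
def cornerFill (i j : Fin n) (k : Fin r) : Fin n :=
  if h : n - s ≤ i ∧ n - s ≤ j then
    g k ⟨(i - (n - s) + (j - (n - s))) % s, Nat.mod_lt _ (by have := i.isLt; omega)⟩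
  else (C i j k).getD i

theorem cornerFill_eq_of_eq_some
    (hcorner : ∀ (i j : Fin n) k, n - s ≤ (i : ℕ) → n - s ≤ (j : ℕ) → C i j k = none)
    {i j : Fin n} {k : Fin r} {x : Fin n} (h : C i j k = some x) : cornerFill C g i j k = x := by
  have hij : ¬(n - s ≤ (i : ℕ) ∧ n - s ≤ (j : ℕ)) := fun hij => by
    simp [hcorner i j k hij.1 hij.2] at h
  rw [cornerFill, dif_neg hij, h, Option.getD_some]

variable
  (hfilled : ∀ (i j : Fin n) k, C i j k = none → n - s ≤ (i : ℕ) ∧ n - s ≤ (j : ℕ))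
include hfilled

theorem eq_some_cornerFill {i j : Fin n} {k : Fin r}
    (h : ¬(n - s ≤ (i : ℕ) ∧ n - s ≤ (j : ℕ))) :
    C i j k = some (cornerFill C g i j k) := by
  rw [cornerFill, dif_neg h, Option.getD_of_ne_none (mt (hfilled i j k) h)]

theorem cornerFill_injective_depth (hC : IsPartialLatinBox C)
    (hg : ∀ t, Injective fun k => g k t) (i j : Fin n) :
    Injective fun k => cornerFill C g i j k := by
  intro k₁ k₂ h
  dsimp only at h
  by_cases hij : n - s ≤ (i : ℕ) ∧ n - s ≤ (j : ℕ)
  · simp only [cornerFill, dif_pos hij] at h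
    exact hg _ h
  · exact hC.1 i j k₁ k₂ _ (h ▸ eq_some_cornerFill hfilled hij)
      (eq_some_cornerFill hfilled hij)

theorem cornerFill_injective_row (hC : IsPartialLatinBox C) (hg : ∀ k, Injective (g k))
    (hrow : ∀ (i j : Fin n) k t, n - s ≤ (i : ℕ) → C i j k ≠ some (g k t))
    (i : Fin n) (k : Fin r) :
    Injective fun j => cornerFill C g i j k := by
  intro j₁ j₂ h
  dsimp only at h
  by_cases h₁ : n - s ≤ (i : ℕ) ∧ n - s ≤ (j₁ : ℕ) <;>
    by_cases h₂ : n - s ≤ (i : ℕ) ∧ n - s ≤ (j₂ : ℕ)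
  · simp only [cornerFill, dif_pos h₁, dif_pos h₂] at h
    have := (Nat.ModEq.add_left_cancel' _ (Fin.val_eq_of_eq (hg k h))).eq_of_lt_of_lt
      (by have := j₁.isLt; omega) (by have := j₂.isLt; omega)
    exact Fin.ext (by omega)
  · exact absurd (h ▸ eq_some_cornerFill (g := g) (k := k) hfilled h₂)
      (by rw [cornerFill, dif_pos h₁]; exact hrow _ _ _ _ h₁.1)
  · exact absurd (h ▸ eq_some_cornerFill (g := g) (k := k) hfilled h₁)
      (by rw [cornerFill, dif_pos h₂]; exact hrow _ _ _ _ h₂.1)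
  · exact hC.2.1 i j₁ j₂ k _ (h ▸ eq_some_cornerFill hfilled h₁)
      (eq_some_cornerFill hfilled h₂)

theorem cornerFill_injective_column (hC : IsPartialLatinBox C)
    (hg : ∀ k, Injective (g k))
    (hcol : ∀ (i j : Fin n) k t, n - s ≤ (j : ℕ) → C i j k ≠ some (g k t))
    (j : Fin n) (k : Fin r) :
    Injective fun i => cornerFill C g i j k := by
  intro i₁ i₂ h
  dsimp only at h
  by_cases h₁ : n - s ≤ (i₁ : ℕ) ∧ n - s ≤ (j : ℕ) <;>
    by_cases h₂ : n - s ≤ (i₂ : ℕ) ∧ n - s ≤ (j : ℕ)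
  · simp only [cornerFill, dif_pos h₁, dif_pos h₂] at h
    have := (Nat.ModEq.add_right_cancel' _ (Fin.val_eq_of_eq (hg k h))).eq_of_lt_of_lt
      (by have := i₁.isLt; omega) (by have := i₂.isLt; omega)
    exact Fin.ext (by omega)
  · exact absurd (h ▸ eq_some_cornerFill (g := g) (k := k) hfilled h₂)
      (by rw [cornerFill, dif_pos h₁]; exact hcol _ _ _ _ h₁.2)
  · exact absurd (h ▸ eq_some_cornerFill (g := g) (k := k) hfilled h₁)
      (by rw [cornerFill, dif_pos h₂]; exact hcol _ _ _ _ h₂.2)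
  · exact hC.2.2 i₁ i₂ j k _ (h ▸ eq_some_cornerFill hfilled h₁)
      (eq_some_cornerFill hfilled h₂)

theorem isLatinBox_cornerFill (hC : IsPartialLatinBox C)
    (hg_row : ∀ k, Injective (g k)) (hg_col : ∀ t, Injective fun k => g k t)
    (hrow : ∀ (i j : Fin n) k t, n - s ≤ (i : ℕ) → C i j k ≠ some (g k t))
    (hcol : ∀ (i j : Fin n) k t, n - s ≤ (j : ℕ) → C i j k ≠ some (g k t)) :
    IsLatinBox (cornerFill C g) :=
  ⟨cornerFill_injective_depth hfilled hC hg_col, cornerFill_injective_row hfilled hC hg_row hrow,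
    cornerFill_injective_column hfilled hC hg_row hcol⟩

end CornerFill

theorem right_corner_channel_general (n r s : ℕ) (hr : r ≤ n) (hs : s ≤ n)
    (C : Fin n → Fin n → Fin r → Option (Fin n))
    (hC : IsPartialLatinBox C)
    (hempty : ∀ (i j : Fin n) (k : Fin r),
      C i j k = none ↔ (n - s ≤ (i : ℕ) ∧ n - s ≤ (j : ℕ)))
    (V : Fin r → Set (Fin n))
    (hVrow : ∀ (k : Fin r) (i : Fin n), n - s ≤ (i : ℕ) →
      {x : Fin n | ∃ j, C i j k = some x} = V k)
    (hVcol : ∀ (k : Fin r) (j : Fin n), n - s ≤ (j : ℕ) →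
      {x : Fin n | ∃ i, C i j k = some x} = V k)
    (i₀ : Fin n) (hi₀ : (i₀ : ℕ) = n - s)
    (hcount : ∀ x : Fin n,
      r - s ≤ (Finset.univ.filter fun p : Fin n × Fin r => C i₀ p.1 p.2 = some x).card) :
    ∃ D : Fin n → Fin n → Fin r → Fin n, IsLatinBox D ∧
      ∀ i j k x, C i j k = some x → D i j k = x := by
  set W : Fin r → Finset (Fin n) := fun k =>
    ({x | ∃ j, C i₀ j k = some x} : Finset (Fin n))ᶜ
  have hW_iff : ∀ k x, x ∈ W k ↔ x ∉ V k := by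
    intro k x
    simp [W, ← hVrow k i₀ hi₀.ge]
  have hW_card : ∀ k, #(W k) = s := by
    intro k
    have hfilled₀ : #({j | C i₀ j k ≠ none} : Finset (Fin n)) = n - s := by
      simp_rw [ne_eq, hempty, hi₀, le_refl, true_and, not_le, Fin.card_filter_val_lt]
      omega
    rw [card_compl, Fintype.card_fin, card_filter_exists_eq_some (fun j => C i₀ j k)
      (fun j₁ j₂ x => hC.2.1 i₀ j₁ j₂ k x), hfilled₀]
    omega
  have hW_deg : ∀ x, #{k | x ∈ W k} ≤ s := by
    intro x
    have hV_deg := (hcount x).trans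
      (card_filter_eq_some_le (C i₀) (fun j₁ j₂ k y => hC.2.1 i₀ j₁ j₂ k y) x)
    have hsplit := card_filter_add_card_filter_not (s := univ) (p := fun k => x ∈ W k)
    simp only [W, mem_compl, mem_filter, mem_univ, true_and, not_not, card_univ,
      Fintype.card_fin] at hsplit ⊢
    omega
  obtain ⟨g, hgW, hg_row, hg_col⟩ :=
    exists_latinRectangle_of_card_filter_mem_le (by simpa using hr) W hW_card hW_deg
  refine ⟨cornerFill C g,
    isLatinBox_cornerFill (fun i j k => (hempty i j k).1) hC hg_row hg_col ?_ ?_,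
    fun i j k x => cornerFill_eq_of_eq_some fun i j k hi hj => (hempty i j k).2 ⟨hi, hj⟩⟩
  · intro i j k t hi hCg
    exact (hW_iff k _).1 (hgW k t) (hVrow k i hi ▸ ⟨j, hCg⟩)
  · intro i j k t hj hCg
    exact (hW_iff k _).1 (hgW k t) (hVcol k j hj ▸ ⟨i, hCg⟩)

/-- completing the corner channel of an n × n × r partial latin box. -/
theorem right_corner_channel (n r s : ℕ) (hr : r ≤ n) (hs : s ≤ n) (hs0 : 0 < s)
    (C : Fin n → Fin n → Fin r → Option (Fin n))
    (hC : IsPartialLatinBox C)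
    (hempty : ∀ (i j : Fin n) (k : Fin r),
      C i j k = none ↔ (n - s ≤ (i : ℕ) ∧ n - s ≤ (j : ℕ)))
    (V : Fin r → Set (Fin n))
    (hVrow : ∀ (k : Fin r) (i : Fin n), n - s ≤ (i : ℕ) →
      {x : Fin n | ∃ j, C i j k = some x} = V k)
    (hVcol : ∀ (k : Fin r) (j : Fin n), n - s ≤ (j : ℕ) →
      {x : Fin n | ∃ i, C i j k = some x} = V k)
    (i₀ : Fin n) (hi₀ : (i₀ : ℕ) = n - s)
    (hcount : ∀ x : Fin n,
      r - s ≤ (Finset.univ.filter fun p : Fin n × Fin r => C i₀ p.1 p.2 = some x).card) :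
    ∃ D : Fin n → Fin n → Fin r → Fin n, IsLatinBox D ∧
      ∀ i j k x, C i j k = some x → D i j k = x :=
  right_corner_channel_general n r s hr hs C hC hempty V hVrow hVcol i₀ hi₀ hcount
end
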